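/- arXiv:2510.24906 — 7 statements merged into one kernel-verified Lean document; each statement's English description precedes it below -/
import Mathlib

section
/- Let (N,v) be a convex coalitional game, let i ∈ N be a player, and let c be a real number with v({i}) ≤ c ≤ v(N) − v(N∖{i}). Then the c-reduced game (N∖{i}, Ψ^{i→c}_v) is convex. -/
open Finset

/-- A game is convex if marginal contributions increase with coalition size. -/
def IsConvex {α : Type*} [DecidableEq α] (v : Finset α → ℝ) : Prop :=
  ∀ (i : α) (S T : Finset α), S ⊆ T → i ∉ T →
    v (insert i S) - v S ≤ v (insert i T) - v T

/-- An integer game: every coalition value is an integer. -/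
def IsIntegerGame {α : Type*} (v : Finset α → ℝ) : Prop :=
  ∀ S : Finset α, ∃ z : ℤ, v S = (z : ℝ)

/-- A size-bounded game: `v S < |S|` for every nonempty coalition. -/
def IsSizeBounded {α : Type*} (v : Finset α → ℝ) : Prop :=
  ∀ S : Finset α, S.Nonempty → v S < (S.card : ℝ)

/-- A payoff vector belongs to the core. -/
def InCore {α : Type*} [Fintype α] [DecidableEq α] (v : Finset α → ℝ) (x : α → ℝ) : Prop :=
  (∑ i, x i) = v Finset.univ ∧ ∀ S : Finset α, v S ≤ ∑ i ∈ S, x i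

/-- The set of players preceding `i` in the ordering `σ`. -/
def preSet {α : Type*} [Fintype α] [DecidableEq α]
    (σ : α ≃ Fin (Fintype.card α)) (i : α) : Finset α :=
  Finset.univ.filter (fun j => σ j < σ i)

/-- The Shapley value of player `i`: average marginal contribution over all orderings. -/
noncomputable def SV {α : Type*} [Fintype α] [DecidableEq α]
    (v : Finset α → ℝ) (i : α) : ℝ :=
  (∑ σ : α ≃ Fin (Fintype.card α), (v (insert i (preSet σ i)) - v (preSet σ i))) /
    (Nat.factorial (Fintype.card α) : ℝ)

/-- The Harsanyi dividend of a coalition. -/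
noncomputable def dividend {α : Type*} [DecidableEq α] (v : Finset α → ℝ) (S : Finset α) : ℝ :=
  ∑ T ∈ S.powerset, (-1 : ℝ) ^ (S.card - T.card) * v T

/-- A positive game: all Harsanyi dividends are nonnegative. -/
def IsPositive {α : Type*} [DecidableEq α] (v : Finset α → ℝ) : Prop :=
  ∀ S : Finset α, 0 ≤ dividend v S

/-- The `c`-reduced game on player set `N \ {i}`. -/
noncomputable def reducedGame {α : Type*} [Fintype α] [DecidableEq α]
    (v : Finset α → ℝ) (i : α) (c : ℝ) : Finset {j : α // j ≠ i} → ℝ :=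
  fun S =>
    if S = Finset.univ then v Finset.univ - c
    else if S = ∅ then 0
    else max (v (insert i (S.image Subtype.val)) - c) (v (S.image Subtype.val))

/-!
On coalitions not containing `i`, the bounds on `c` make the reduced game equal to
`S ↦ max (v (S ∪ {i}) - c) (v S)` everywhere, including at `∅` and `N \ {i}`. Both arguments of
the maximum are convex games, and their difference `v (S ∪ {i}) - v S - c` is monotone by
convexity of `v`; the maximum of two convex games with monotone difference is convex.
-/

namespace IsConvex

variable {α β : Type*} [DecidableEq α] [DecidableEq β]

theorem comp_image {v : Finset β → ℝ} (hv : IsConvex v) {e : α → β}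
    (he : Function.Injective e) : IsConvex fun S => v (S.image e) := by
  intro k S T hST hkT
  simp only [image_insert]
  exact hv (e k) _ _ (image_subset_image hST) (by rwa [he.mem_finset_image])

theorem comp_insert {v : Finset α → ℝ} (hv : IsConvex v) (i : α) :
    IsConvex fun S => v (insert i S) := by
  intro k S T hST hkT
  by_cases hki : k = i
  · simp [hki]
  · have := hv k (insert i S) (insert i T) (insert_subset_insert i hST) (by simp [hki, hkT])
    rwa [insert_comm k i S, insert_comm k i T] at this

theorem sub_const {v : Finset α → ℝ} (hv : IsConvex v) (c : ℝ) :
    IsConvex fun S => v S - c := by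
  intro k S T hST hkT
  linarith [hv k S T hST hkT]

theorem max {f g : Finset α → ℝ} (hf : IsConvex f) (hg : IsConvex g)
    (hfg : Monotone fun S => f S - g S) : IsConvex fun S => max (f S) (g S) := by
  intro k S T hST hkT
  have hfk := hf k S T hST hkT
  have hgk := hg k S T hST hkT
  have hST' : f S - g S ≤ f T - g T := hfg hST
  have hTk : f T - g T ≤ f (insert k T) - g (insert k T) := hfg (subset_insert k T)
  rcases le_total (g (insert k S)) (f (insert k S)) with hSk | hSk <;>
    rcases le_total (g T) (f T) with hT' | hT' <;>
    simp only [max_eq_left, max_eq_right, hSk, hT'] <;>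
    linarith [le_max_left (f (insert k T)) (g (insert k T)),
      le_max_right (f (insert k T)) (g (insert k T)), le_max_left (f S) (g S),
      le_max_right (f S) (g S)]

end IsConvex

theorem image_univ_subtype_ne {α : Type*} [Fintype α] [DecidableEq α] (i : α) :
    (univ : Finset {j : α // j ≠ i}).image Subtype.val = univ.erase i := by
  ext k
  simp [eq_comm]

theorem reducedGame_eq_max {α : Type*} [Fintype α] [DecidableEq α]
    {v : Finset α → ℝ} (hv0 : v ∅ = 0) {i : α} {c : ℝ}
    (hc1 : v {i} ≤ c) (hc2 : c ≤ v univ - v (univ.erase i)) :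
    reducedGame v i c =
      fun S => max (v (insert i (S.image Subtype.val)) - c) (v (S.image Subtype.val)) := by
  funext S
  unfold reducedGame
  split_ifs with huniv hempty
  · rw [huniv, image_univ_subtype_ne, insert_erase (mem_univ i), max_eq_left (by linarith)]
  · rw [hempty, image_empty, hv0, max_eq_right (by simpa using hc1)]
  · rfl

theorem stmt0_general {N : Type*} [Fintype N] [DecidableEq N]
    (v : Finset N → ℝ) (hv0 : v ∅ = 0)
    (hconv : IsConvex v) (i : N) (c : ℝ)
    (hc1 : v {i} ≤ c) (hc2 : c ≤ v Finset.univ - v (Finset.univ.erase i)) :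
    IsConvex (reducedGame v i c) := by
  rw [reducedGame_eq_max hv0 hc1 hc2]
  have hinj : Function.Injective (Subtype.val : {j : N // j ≠ i} → N) := Subtype.val_injective
  refine ((hconv.comp_insert i).sub_const c |>.comp_image hinj).max (hconv.comp_image hinj) ?_
  intro S T hST
  have hiT : i ∉ T.image Subtype.val := by simp
  have hmarg := hconv i _ _ (image_subset_image hST) hiT
  simp only
  linarith

theorem stmt0 {N : Type*} [Fintype N] [DecidableEq N] [Nonempty N]
    (v : Finset N → ℝ) (hv0 : v ∅ = 0)
    (hconv : IsConvex v) (i : N) (c : ℝ)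
    (hc1 : v {i} ≤ c) (hc2 : c ≤ v Finset.univ - v (Finset.univ.erase i)) :
    IsConvex (reducedGame v i c) :=
  stmt0_general v hv0 hconv i c hc1 hc2
end

section
/- For every convex integer coalitional game (N,v) there exists a payoff vector x ∈ ℤ^N that belongs to the core of (N,v) and satisfies ⌊SV_i(N,v)⌋ ≤ x_i ≤ ⌈SV_i(N,v)⌉ for every player i ∈ N. -/
open Finset

/-! Convexity makes every marginal vector a core element, so the Shapley value, their average,
lies in the core. The core cut down to the integer box `[⌊SV⌋, ⌈SV⌉]` is a nonempty compact
polytope, and its extreme points are integral. Indeed, by supermodularity the coalitions that are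
tight at a core point are closed under intersection. If a point of the polytope has a fractional
coordinate, take a fractional player `i` whose smallest tight coalition `M i` is as small as
possible. As `v (M i)` is an integer, `M i` contains another fractional player `j`; minimality
forces `M j = M i`, so no tight coalition separates `i` from `j`. Shifting a little payoff from
`i` to `j` or back then stays in the polytope, so the point is not extreme. -/
section Marginal
variable {α : Type*} [Fintype α] [DecidableEq α]

def marginalVector (v : Finset α → ℝ) (σ : α ≃ Fin (Fintype.card α)) (i : α) : ℝ :=
  v (insert i (preSet σ i)) - v (preSet σ i)

lemma SV_eq_sum_marginalVector_div (v : Finset α → ℝ) (i : α) :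
    SV v i = (∑ σ, marginalVector v σ i) / (Fintype.card α).factorial := rfl

lemma sum_sub_inter_preSet (v : Finset α → ℝ) (σ : α ≃ Fin (Fintype.card α)) (S : Finset α) :
    ∑ i ∈ S, (v (insert i (preSet σ i ∩ S)) - v (preSet σ i ∩ S)) = v S - v ∅ := by
  induction S using Finset.induction_on_max_value σ with
  | empty => simp
  | insert a S haS hmax ih =>
    have hpre : preSet σ a ∩ insert a S = S := by
      ext j
      simp only [preSet, mem_inter, mem_filter, mem_univ, true_and, mem_insert]
      refine ⟨fun ⟨hj, h⟩ => h.resolve_left (by rintro rfl; exact lt_irrefl _ hj), fun hj => ?_⟩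
      exact ⟨(hmax j hj).lt_of_ne (σ.injective.ne (by rintro rfl; exact haS hj)), Or.inr hj⟩
    have hpre' : ∀ i ∈ S, preSet σ i ∩ insert a S = preSet σ i ∩ S := by
      intro i hi
      rw [inter_insert_of_notMem]
      simpa [preSet] using hmax i hi
    rw [sum_insert haS, hpre, sum_congr rfl fun i hi => by rw [hpre' i hi], ih]
    ring

lemma sum_marginalVector (v : Finset α → ℝ) (hv0 : v ∅ = 0) (σ : α ≃ Fin (Fintype.card α)) :
    ∑ i, marginalVector v σ i = v univ := by
  have h := sum_sub_inter_preSet v σ univ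
  simp only [inter_univ, hv0, sub_zero] at h
  exact h

lemma le_sum_marginalVector {v : Finset α → ℝ} (hv0 : v ∅ = 0) (hconv : IsConvex v)
    (σ : α ≃ Fin (Fintype.card α)) (S : Finset α) :
    v S ≤ ∑ i ∈ S, marginalVector v σ i := by
  calc v S = ∑ i ∈ S, (v (insert i (preSet σ i ∩ S)) - v (preSet σ i ∩ S)) := by
        rw [sum_sub_inter_preSet, hv0, sub_zero]
    _ ≤ _ := sum_le_sum fun i _ =>
        hconv i _ _ inter_subset_left (by simp [preSet])

lemma SV_mem_core {v : Finset α → ℝ} (hv0 : v ∅ = 0) (hconv : IsConvex v) : InCore v (SV v) := by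
  have hconst : ∀ c : ℝ, ∑ _σ : α ≃ Fin (Fintype.card α), c = (Fintype.card α).factorial * c := by
    simp [Fintype.card_equiv (Fintype.equivFin α)]
  have hpos : (0 : ℝ) < (Fintype.card α).factorial := by positivity
  have hsum : ∀ S : Finset α,
      ∑ i ∈ S, SV v i = (∑ σ, ∑ i ∈ S, marginalVector v σ i) / (Fintype.card α).factorial := by
    intro S
    simp only [SV_eq_sum_marginalVector_div, ← sum_div]
    rw [sum_comm]
  refine ⟨?_, fun S => ?_⟩
  · rw [hsum, div_eq_iff hpos.ne', sum_congr rfl fun σ _ => sum_marginalVector v hv0 σ, hconst,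
      mul_comm]
  · rw [hsum, le_div_iff₀ hpos, mul_comm, ← hconst]
    exact sum_le_sum fun σ _ => le_sum_marginalVector hv0 hconv σ S

end Marginal

section Supermodular
variable {α : Type*} [DecidableEq α] {v : Finset α → ℝ}

lemma IsConvex.sub_le_sub_union (hconv : IsConvex v) {R S : Finset α} (hRS : R ⊆ S)
    {D : Finset α} (hD : Disjoint D S) : v (R ∪ D) - v R ≤ v (S ∪ D) - v S := by
  induction D using Finset.induction_on with
  | empty => simp
  | insert a D haD ih =>
    have haS : a ∉ S := disjoint_left.mp hD (mem_insert_self a D)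
    have hstep := hconv a (R ∪ D) (S ∪ D) (union_subset_union hRS subset_rfl) (by simp [haS, haD])
    rw [union_insert, union_insert]
    linarith [ih (disjoint_of_subset_left (subset_insert a D) hD)]

lemma IsConvex.add_le_union_add_inter (hconv : IsConvex v) (S T : Finset α) :
    v S + v T ≤ v (S ∪ T) + v (S ∩ T) := by
  have h := hconv.sub_le_sub_union (inter_subset_left : S ∩ T ⊆ S) (D := T \ S)
    disjoint_sdiff_self_left
  rw [union_sdiff_self_eq_union, inter_comm, union_comm, sdiff_union_inter, inter_comm] at h
  linarith

end Supermodular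

section Tight
open scoped Classical
variable {α : Type*} [Fintype α] [DecidableEq α] {v : Finset α → ℝ} {z : α → ℝ}

def IsTight (v : Finset α → ℝ) (z : α → ℝ) (S : Finset α) : Prop :=
  ∑ k ∈ S, z k = v S

lemma IsTight.inter (hconv : IsConvex v) (hz : InCore v z) {S T : Finset α}
    (hS : IsTight v z S) (hT : IsTight v z T) : IsTight v z (S ∩ T) := by
  have hsum : ∑ k ∈ S ∪ T, z k + ∑ k ∈ S ∩ T, z k = ∑ k ∈ S, z k + ∑ k ∈ T, z k :=
    sum_union_inter
  have := hconv.add_le_union_add_inter S T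
  have := hz.2 (S ∪ T)
  have := hz.2 (S ∩ T)
  unfold IsTight at *
  linarith

noncomputable def tightClosure (v : Finset α → ℝ) (z : α → ℝ) (i : α) : Finset α :=
  ((univ : Finset (Finset α)).filter fun S => i ∈ S ∧ IsTight v z S).inf id

lemma tightClosure_subset {i : α} {S : Finset α} (hi : i ∈ S) (hS : IsTight v z S) :
    tightClosure v z i ⊆ S :=
  inf_le (f := id) (mem_filter.mpr ⟨mem_univ S, hi, hS⟩)

lemma mem_tightClosure_and_isTight (hconv : IsConvex v) (hz : InCore v z) (i : α) :
    i ∈ tightClosure v z i ∧ IsTight v z (tightClosure v z i) :=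
  inf_induction (p := fun S => i ∈ S ∧ IsTight v z S) ⟨mem_univ i, hz.1⟩
    (fun _ h₁ _ h₂ => ⟨mem_inter.mpr ⟨h₁.1, h₂.1⟩, h₁.2.inter hconv hz h₂.2⟩)
    (fun _ hS => (mem_filter.mp hS).2)

end Tight

section Perturbation
open Filter Topology

lemma eventually_le_add_mul {c a b : ℝ} (h : c ≤ a) (hb : b ≠ 0 → c < a) :
    ∀ᶠ t in 𝓝 (0 : ℝ), c ≤ a + t * b := by
  by_cases hb0 : b = 0
  · simp [hb0, h]
  · have hcont : ContinuousAt (fun t : ℝ => a + t * b) 0 := by fun_prop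
    exact (continuousAt_const.eventually_lt hcont (by simpa using hb hb0)).mono fun _ => le_of_lt

lemma eventually_add_smul_mem_Icc {α : Type*} [Finite α] {lo hi z d : α → ℝ}
    (hz : z ∈ Set.Icc lo hi) (hd : ∀ k, d k ≠ 0 → lo k < z k ∧ z k < hi k) :
    ∀ᶠ t in 𝓝 (0 : ℝ), z + t • d ∈ Set.Icc lo hi := by
  have hlo : ∀ k, ∀ᶠ t in 𝓝 (0 : ℝ), lo k ≤ z k + t * d k := fun k =>
    eventually_le_add_mul (hz.1 k) fun h => (hd k h).1
  have hhi : ∀ k, ∀ᶠ t in 𝓝 (0 : ℝ), -hi k ≤ -z k + t * -d k := fun k =>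
    eventually_le_add_mul (neg_le_neg (hz.2 k)) fun h => neg_lt_neg (hd k (neg_ne_zero.mp h)).2
  filter_upwards [eventually_all.mpr hlo, eventually_all.mpr hhi] with t hl hh
  refine ⟨fun k => hl k, fun k => ?_⟩
  show z k + t * d k ≤ hi k
  linarith [hh k]

lemma eventually_inCore_add_smul {α : Type*} [Fintype α] [DecidableEq α] {v : Finset α → ℝ}
    {z d : α → ℝ} (hz : InCore v z) (hd : ∑ k, d k = 0)
    (hslack : ∀ S : Finset α, ∑ k ∈ S, d k ≠ 0 → v S < ∑ k ∈ S, z k) :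
    ∀ᶠ t in 𝓝 (0 : ℝ), InCore v (z + t • d) := by
  have hsum : ∀ (t : ℝ) (S : Finset α), ∑ k ∈ S, (z + t • d) k = ∑ k ∈ S, z k + t * ∑ k ∈ S, d k :=
    fun t S => by simp [sum_add_distrib, mul_sum]
  have hS : ∀ S : Finset α, ∀ᶠ t in 𝓝 (0 : ℝ), v S ≤ ∑ k ∈ S, z k + t * ∑ k ∈ S, d k :=
    fun S => eventually_le_add_mul (hz.2 S) (hslack S)
  filter_upwards [eventually_all.mpr hS] with t ht
  exact ⟨by rw [hsum, hd, mul_zero, add_zero, hz.1], fun S => (hsum t S).symm ▸ ht S⟩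

lemma notMem_extremePoints_of_eventually_add_smul_mem {E : Type*} [AddCommGroup E] [Module ℝ E]
    {A : Set E} {z d : E} (hd : d ≠ 0) (h : ∀ᶠ t in 𝓝 (0 : ℝ), z + t • d ∈ A) :
    z ∉ A.extremePoints ℝ := by
  intro hz
  have h' : ∀ᶠ t in 𝓝 (0 : ℝ), z + (-t) • d ∈ A :=
    (continuous_neg.tendsto' (0 : ℝ) 0 neg_zero).eventually h
  obtain ⟨t, ⟨hplus, hminus⟩, ht⟩ :=
    (((h.and h').filter_mono nhdsWithin_le_nhds).and (self_mem_nhdsWithin (s := {0}ᶜ))).exists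
  rw [neg_smul, ← sub_eq_add_neg] at hminus
  have := (mem_extremePoints.mp hz).2 _ hplus _ hminus (mem_openSegment_add_sub z (t • d))
  exact smul_ne_zero ht hd (add_eq_left.mp this.1)

end Perturbation

section Integrality
variable {α : Type*} [Fintype α] [DecidableEq α] {v : Finset α → ℝ} {z : α → ℝ}

lemma exists_inseparable_of_notMem_range_intCast (hconv : IsConvex v) (hint : IsIntegerGame v)
    (hz : InCore v z) {k : α} (hk : z k ∉ (Int.castAddHom ℝ).range) :
    ∃ i j, i ≠ j ∧ z i ∉ (Int.castAddHom ℝ).range ∧ z j ∉ (Int.castAddHom ℝ).range ∧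
      ∀ S, IsTight v z S → (i ∈ S ↔ j ∈ S) := by
  classical
  set M := tightClosure v z
  set F := univ.filter fun k => z k ∉ (Int.castAddHom ℝ).range
  obtain ⟨i, hiF, hmin⟩ := F.exists_min_image (fun k => #(M k)) ⟨k, by simpa [F] using hk⟩
  have hi : z i ∉ (Int.castAddHom ℝ).range := (mem_filter.mp hiF).2
  have hMi := mem_tightClosure_and_isTight hconv hz i
  -- `z i` is `v (M i)` minus the other payoffs in `M i`, so one of those is fractional too.
  obtain ⟨j, hjM, hji, hj⟩ : ∃ j ∈ M i, j ≠ i ∧ z j ∉ (Int.castAddHom ℝ).range := by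
    by_contra! h
    obtain ⟨m, hm⟩ := hint (M i)
    have htight : ∑ k ∈ M i, z k = v (M i) := hMi.2
    have hzi : z i = v (M i) - ∑ k ∈ (M i).erase i, z k := by
      rw [← htight, ← add_sum_erase _ _ hMi.1, add_sub_cancel_right]
    exact hi (hzi ▸ sub_mem ⟨m, hm.symm⟩
      (sum_mem fun k hk => h k (mem_of_mem_erase hk) (ne_of_mem_erase hk)))
  have hMj : M j = M i :=
    eq_of_subset_of_card_le (tightClosure_subset hjM hMi.2) (hmin j (by simpa [F] using hj))
  refine ⟨i, j, hji.symm, hi, hj, fun S hS => ⟨fun hiS => tightClosure_subset hiS hS hjM,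
    fun hjS => tightClosure_subset hjS hS (hMj ▸ hMi.1 : i ∈ M j)⟩⟩

lemma intCast_lt_lt_intCast_of_notMem_range {m n : ℤ} {x : ℝ} (hm : (m : ℝ) ≤ x) (hn : x ≤ n)
    (hx : x ∉ (Int.castAddHom ℝ).range) : (m : ℝ) < x ∧ x < n :=
  ⟨hm.lt_of_ne fun he => hx ⟨m, he⟩, hn.lt_of_ne fun he => hx ⟨n, he.symm⟩⟩

lemma mem_range_intCast_of_mem_extremePoints (hconv : IsConvex v) (hint : IsIntegerGame v)
    {lo up : α → ℤ} (hz : z ∈ ({x | InCore v x} ∩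
      Set.Icc (fun k => (lo k : ℝ)) (fun k => (up k : ℝ))).extremePoints ℝ) (k : α) :
    z k ∈ (Int.castAddHom ℝ).range := by
  by_contra hk
  obtain ⟨hcore, hbox⟩ := extremePoints_subset hz
  obtain ⟨i, j, hij, hzi, hzj, hsep⟩ :=
    exists_inseparable_of_notMem_range_intCast hconv hint hcore hk
  -- Moving payoff between `i` and `j` keeps every tight constraint tight.
  set d : α → ℝ := Pi.single i 1 - Pi.single j 1
  have hdS : ∀ S : Finset α, ∑ k ∈ S, d k = (if i ∈ S then 1 else 0) - (if j ∈ S then 1 else 0) :=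
    fun S => by simp [d, sum_sub_distrib, sum_pi_single']
  have hstrict : ∀ k, d k ≠ 0 → (lo k : ℝ) < z k ∧ z k < up k := by
    intro k hk
    refine intCast_lt_lt_intCast_of_notMem_range (hbox.1 k) (hbox.2 k) ?_
    by_cases hki : k = i
    · exact hki ▸ hzi
    by_cases hkj : k = j
    · exact hkj ▸ hzj
    simp [d, hki, hkj] at hk
  refine notMem_extremePoints_of_eventually_add_smul_mem (d := d) ?_ ?_ hz
  · intro h
    simpa [d, hij] using congrFun h i
  · refine (eventually_inCore_add_smul hcore (by simpa using hdS univ) fun S hS => ?_).and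
      (eventually_add_smul_mem_Icc hbox hstrict)
    refine (hcore.2 S).lt_of_ne fun htight => ?_
    have := hsep S htight.symm
    by_cases hiS : i ∈ S <;> simp_all

end Integrality

lemma isClosed_setOf_inCore {α : Type*} [Fintype α] [DecidableEq α] (v : Finset α → ℝ) :
    IsClosed {x : α → ℝ | InCore v x} := by
  have hcont : ∀ S : Finset α, Continuous fun x : α → ℝ => ∑ k ∈ S, x k :=
    fun S => continuous_finsetSum S fun k _ => continuous_apply k
  simp only [InCore, Set.ofPred_and, Set.ofPred_forall]
  exact (isClosed_eq (hcont univ) continuous_const).inter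
    (isClosed_iInter fun S => isClosed_le continuous_const (hcont S))

lemma InCore.exists_int_floor_le_le_ceil {α : Type*} [Fintype α] [DecidableEq α]
    {v : Finset α → ℝ} (hconv : IsConvex v) (hint : IsIntegerGame v) {y : α → ℝ}
    (hy : InCore v y) :
    ∃ x : α → ℤ, InCore v (fun i => (x i : ℝ)) ∧ ∀ i, ⌊y i⌋ ≤ x i ∧ x i ≤ ⌈y i⌉ := by
  set C := {x | InCore v x} ∩ Set.Icc (fun k => (⌊y k⌋ : ℝ)) (fun k => (⌈y k⌉ : ℝ))
  have hcompact : IsCompact C := isCompact_Icc.inter_left (isClosed_setOf_inCore v)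
  obtain ⟨z, hz⟩ := hcompact.extremePoints_nonempty
    ⟨y, hy, fun k => Int.floor_le (y k), fun k => Int.le_ceil (y k)⟩
  choose x hx using mem_range_intCast_of_mem_extremePoints hconv hint hz
  replace hx : ∀ k, (x k : ℝ) = z k := hx
  have hxz : (fun k => (x k : ℝ)) = z := funext hx
  obtain ⟨hcore, hlo, hhi⟩ := extremePoints_subset hz
  refine ⟨x, hxz ▸ hcore, fun k => ⟨?_, ?_⟩⟩
  · have := hlo k
    simp only [← hx k] at this
    exact_mod_cast this
  · have := hhi k
    simp only [← hx k] at this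
    exact_mod_cast this

theorem stmt4_general {N : Type*} [Fintype N] [DecidableEq N]
    (v : Finset N → ℝ) (hv0 : v ∅ = 0)
    (hconv : IsConvex v) (hint : IsIntegerGame v) :
    ∃ x : N → ℤ, InCore v (fun i => (x i : ℝ)) ∧
      ∀ i : N, ⌊SV v i⌋ ≤ x i ∧ x i ≤ ⌈SV v i⌉ :=
  (SV_mem_core hv0 hconv).exists_int_floor_le_le_ceil hconv hint

theorem stmt4 {N : Type*} [Fintype N] [DecidableEq N] [Nonempty N]
    (v : Finset N → ℝ) (hv0 : v ∅ = 0)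
    (hconv : IsConvex v) (hint : IsIntegerGame v) :
    ∃ x : N → ℤ, InCore v (fun i => (x i : ℝ)) ∧
      ∀ i : N, ⌊SV v i⌋ ≤ x i ∧ x i ≤ ⌈SV v i⌉ :=
  stmt4_general v hv0 hconv hint
end

section
/- Let (N,v) be a convex integer coalitional game, let x ∈ ℝ^N be a payoff vector in the core of (N,v), and let S, T ⊆ N be coalitions such that Σ_{i∈S} x_i = v(S) and Σ_{i∈T} x_i = v(T). Then Σ_{i∈S∪T} x_i = v(S ∪ T) and Σ_{i∈S∩T} x_i = v(S ∩ T). -/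
open Finset

lemma convex_set_mono {α : Type*} [DecidableEq α] {v : Finset α → ℝ}
    (hconv : IsConvex v) (U : Finset α) :
    ∀ S T : Finset α, S ⊆ T → Disjoint U T →
      v (S ∪ U) - v S ≤ v (T ∪ U) - v T := by
  induction U using Finset.induction with
  | empty => intro S T _ _; simp
  | insert _ _ hi ih =>
    rename_i i U
    intro S T hST hdisj
    have hdU : Disjoint U T := (Finset.disjoint_insert_left.mp hdisj).2
    have hiT : i ∉ T := (Finset.disjoint_insert_left.mp hdisj).1
    have h1 : v (insert i (S ∪ U)) - v (S ∪ U) ≤ v (insert i (T ∪ U)) - v (T ∪ U) := by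
      apply hconv i _ _ (Finset.union_subset_union hST (le_refl U))
      simp only [Finset.mem_union, not_or]
      exact ⟨hiT, hi⟩
    have h2 := ih S T hST hdU
    have e1 : S ∪ insert i U = insert i (S ∪ U) := by
      ext a; simp [Finset.mem_insert, Finset.mem_union]
    have e2 : T ∪ insert i U = insert i (T ∪ U) := by
      ext a; simp [Finset.mem_insert, Finset.mem_union]
    rw [e1, e2]; linarith

lemma convex_supermod {α : Type*} [DecidableEq α] {v : Finset α → ℝ}
    (hconv : IsConvex v) (A B : Finset α) :
    v A + v B ≤ v (A ∪ B) + v (A ∩ B) := by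
  have h := convex_set_mono hconv (B \ A) (A ∩ B) A Finset.inter_subset_left
    (Finset.disjoint_left.mpr (fun a ha hA => (Finset.mem_sdiff.mp ha).2 hA))
  have e1 : A ∩ B ∪ B \ A = B := by
    ext a; simp [Finset.mem_union, Finset.mem_inter, Finset.mem_sdiff]; tauto
  have e2 : A ∪ B \ A = A ∪ B := by
    ext a; simp [Finset.mem_union, Finset.mem_sdiff]
  rw [e1, e2] at h; linarith

theorem stmt6 {N : Type*} [Fintype N] [DecidableEq N] [Nonempty N]
    (v : Finset N → ℝ) (hv0 : v ∅ = 0)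
    (hconv : IsConvex v) (hint : IsIntegerGame v)
    (x : N → ℝ) (hx : InCore v x) (S T : Finset N)
    (hS : ∑ i ∈ S, x i = v S) (hT : ∑ i ∈ T, x i = v T) :
    ∑ i ∈ S ∪ T, x i = v (S ∪ T) ∧ ∑ i ∈ S ∩ T, x i = v (S ∩ T) := by
  have hsum : ∑ i ∈ S ∪ T, x i + ∑ i ∈ S ∩ T, x i = ∑ i ∈ S, x i + ∑ i ∈ T, x i :=
    Finset.sum_union_inter
  have h1 := hx.2 (S ∪ T)
  have h2 := hx.2 (S ∩ T)
  have h3 := convex_supermod hconv S T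
  constructor <;> linarith
end

section
/- Let (N,v) be a positive coalitional game. Then the Shapley value payoff vector (SV_i(N,v))_{i∈N} belongs to the core of (N,v); that is, Σ_{i∈N} SV_i(N,v) = v(N) and Σ_{i∈S} SV_i(N,v) ≥ v(S) for every S ⊆ N. -/
open Finset

/-- Möbius inversion: the sum of dividends over subsets of `S` is `v S`. -/
lemma sum_dividend {α : Type*} [DecidableEq α] (v : Finset α → ℝ) (S : Finset α) :
    ∑ T ∈ S.powerset, dividend v T = v S := by
  unfold dividend
  rw [Finset.sum_comm' (s := S.powerset) (t := fun T => T.powerset)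
    (t' := S.powerset) (s' := fun U => S.powerset.filter (fun T => U ⊆ T))
    (fun T U => by
      simp only [mem_powerset, mem_filter]
      constructor
      · rintro ⟨h1, h2⟩; exact ⟨⟨h1, h2⟩, h2.trans h1⟩
      · rintro ⟨⟨h1, h2⟩, h3⟩; exact ⟨h1, h2⟩)]
  have key : ∀ U ∈ S.powerset,
      (∑ T ∈ S.powerset.filter (fun T => U ⊆ T), (-1 : ℝ) ^ (T.card - U.card) * v U)
        = if U = S then v U else 0 := by
    intro U hU
    rw [mem_powerset] at hU
    have hbij : ∑ T ∈ S.powerset.filter (fun T => U ⊆ T), (-1 : ℝ) ^ (T.card - U.card)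
        = ∑ W ∈ (S \ U).powerset, (-1 : ℝ) ^ W.card := by
      refine Finset.sum_nbij' (fun T => T \ U) (fun W => U ∪ W) ?_ ?_ ?_ ?_ ?_
      · intro T hT
        rw [mem_filter, mem_powerset] at hT
        rw [mem_powerset]
        exact sdiff_subset_sdiff hT.1 le_rfl
      · intro W hW
        rw [mem_powerset] at hW
        rw [mem_filter, mem_powerset]
        exact ⟨union_subset hU (hW.trans sdiff_subset), subset_union_left⟩
      · intro T hT
        rw [mem_filter, mem_powerset] at hT
        exact union_sdiff_of_subset hT.2
      · intro W hW
        rw [mem_powerset] at hW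
        exact union_sdiff_cancel_left (disjoint_sdiff.mono_right hW)
      · intro T hT
        rw [mem_filter, mem_powerset] at hT
        congr 1
        rw [card_sdiff_of_subset hT.2]
    rw [← Finset.sum_mul, hbij]
    have : (∑ W ∈ (S \ U).powerset, (-1 : ℝ) ^ W.card)
        = ((∑ W ∈ (S \ U).powerset, (-1 : ℤ) ^ W.card : ℤ) : ℝ) := by push_cast; rfl
    rw [this, Finset.sum_powerset_neg_one_pow_card]
    by_cases h : U = S
    · simp [h]
    · have : S \ U ≠ ∅ := by
        rw [Ne, sdiff_eq_empty_iff_subset]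
        exact fun hSU => h (subset_antisymm hU hSU)
      simp [this, h]
  rw [Finset.sum_congr rfl key, Finset.sum_ite_eq' S.powerset S v,
    if_pos (mem_powerset_self S)]

lemma marginal_eq {α : Type*} [DecidableEq α] (v : Finset α → ℝ) (i : α) (B : Finset α)
    (hiB : i ∉ B) :
    v (insert i B) - v B = ∑ T ∈ B.powerset, dividend v (insert i T) := by
  have h1 := sum_dividend v (insert i B)
  have h2 := sum_dividend v B
  have hdisj : Disjoint B.powerset (B.powerset.image (insert i)) := by
    rw [disjoint_left]
    intro T hT hT'
    rw [mem_powerset] at hT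
    obtain ⟨T', _, rfl⟩ := mem_image.mp hT'
    exact hiB (hT (mem_insert_self i T'))
  rw [powerset_insert, Finset.sum_union hdisj, Finset.sum_image ?_] at h1
  · linarith
  · intro T hT T' hT' h
    rw [mem_coe, mem_powerset] at hT hT'
    have hi : i ∉ T := fun hc => hiB (hT hc)
    have hi' : i ∉ T' := fun hc => hiB (hT' hc)
    rw [← erase_insert hi, ← erase_insert hi', h]

lemma conv_of_pos {α : Type*} [DecidableEq α] {v : Finset α → ℝ} (hpos : IsPositive v)
    (i : α) (A B : Finset α) (hAB : A ⊆ B) (hiB : i ∉ B) :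
    v (insert i A) - v A ≤ v (insert i B) - v B := by
  have hiA : i ∉ A := fun h => hiB (hAB h)
  rw [marginal_eq v i A hiA, marginal_eq v i B hiB]
  exact Finset.sum_le_sum_of_subset_of_nonneg (powerset_mono.mpr hAB)
    (fun T _ _ => hpos _)

lemma telescope {α β : Type*} [DecidableEq α] [LinearOrder β] (v : Finset α → ℝ)
    (f : α → β) (hf : Function.Injective f) (S : Finset α) :
    ∑ i ∈ S, (v (insert i (S.filter (fun j => f j < f i)))
      - v (S.filter (fun j => f j < f i))) = v S - v ∅ := by
  induction S using Finset.strongInduction with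
  | _ S ih =>
    rcases S.eq_empty_or_nonempty with rfl | hS
    · simp
    obtain ⟨m, hmS, hmax⟩ := S.exists_max_image f hS
    have hm1 : S.filter (fun j => f j < f m) = S.erase m := by
      ext j
      simp only [mem_filter, mem_erase]
      constructor
      · rintro ⟨hj, hlt⟩; exact ⟨fun h => absurd (h ▸ hlt) (lt_irrefl _), hj⟩
      · rintro ⟨hne, hj⟩
        exact ⟨hj, lt_of_le_of_ne (hmax j hj) (fun h => hne (hf h))⟩
    have hm2 : ∀ i ∈ S.erase m, S.filter (fun j => f j < f i)
        = (S.erase m).filter (fun j => f j < f i) := by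
      intro i hi
      rw [filter_erase, erase_eq_of_notMem]
      intro hc
      rw [mem_filter] at hc
      exact absurd (hmax i (mem_of_mem_erase hi)) (not_le.mpr hc.2)
    rw [← Finset.add_sum_erase _ _ hmS, hm1, insert_erase hmS]
    have := ih (S.erase m) (erase_ssubset hmS)
    rw [Finset.sum_congr rfl (fun i hi => by rw [hm2 i hi]), this]
    ring

/-- Per-ordering sum of marginals over `S` dominates `v S - v ∅`. -/
lemma per_sigma {α : Type*} [Fintype α] [DecidableEq α] {v : Finset α → ℝ}
    (hpos : IsPositive v) (σ : α ≃ Fin (Fintype.card α)) (S : Finset α) :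
    v S - v ∅ ≤ ∑ i ∈ S, (v (insert i (preSet σ i)) - v (preSet σ i)) := by
  have hinj : Function.Injective (fun j => σ j) := σ.injective
  calc v S - v ∅
      = ∑ i ∈ S, (v (insert i (S.filter (fun j => σ j < σ i)))
        - v (S.filter (fun j => σ j < σ i))) := (telescope v _ hinj S).symm
    _ ≤ ∑ i ∈ S, (v (insert i (preSet σ i)) - v (preSet σ i)) := by
        refine Finset.sum_le_sum (fun i hi => ?_)
        refine conv_of_pos hpos i _ _ ?_ ?_
        · intro j hj
          rw [mem_filter] at hj
          exact mem_filter.mpr ⟨mem_univ j, hj.2⟩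
        · simp [preSet]

lemma per_sigma_univ {α : Type*} [Fintype α] [DecidableEq α] (v : Finset α → ℝ)
    (σ : α ≃ Fin (Fintype.card α)) :
    ∑ i, (v (insert i (preSet σ i)) - v (preSet σ i)) = v Finset.univ - v ∅ := by
  have := telescope v (fun j => σ j) σ.injective Finset.univ
  simpa [preSet] using this

theorem stmt13 {N : Type*} [Fintype N] [DecidableEq N] [Nonempty N]
    (v : Finset N → ℝ) (hv0 : v ∅ = 0) (hpos : IsPositive v) :
    InCore v (fun i => SV v i) := by
  have hcard : Fintype.card (N ≃ Fin (Fintype.card N)) = (Fintype.card N).factorial := by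
    rw [Fintype.card_equiv (Fintype.equivFin N)]
  have hfac : (0 : ℝ) < ((Fintype.card N).factorial : ℝ) := by positivity
  constructor
  · simp only [SV, ← Finset.sum_div]
    rw [Finset.sum_comm]
    rw [Finset.sum_congr rfl (fun σ _ => per_sigma_univ v σ), hv0]
    rw [Finset.sum_const, card_univ, hcard]
    field_simp
    rw [nsmul_eq_mul, sub_zero, mul_comm]
  · intro S
    have h1 : ∀ σ : N ≃ Fin (Fintype.card N),
        v S ≤ ∑ i ∈ S, (v (insert i (preSet σ i)) - v (preSet σ i)) := by
      intro σ
      have := per_sigma hpos σ S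
      linarith
    have h2 : ((Fintype.card N).factorial : ℝ) * v S ≤
        ∑ σ : N ≃ Fin (Fintype.card N),
          ∑ i ∈ S, (v (insert i (preSet σ i)) - v (preSet σ i)) := by
      calc ((Fintype.card N).factorial : ℝ) * v S
          = ∑ _σ : N ≃ Fin (Fintype.card N), v S := by
            rw [Finset.sum_const, card_univ, hcard, nsmul_eq_mul]
        _ ≤ _ := Finset.sum_le_sum (fun σ _ => h1 σ)
    simp only [SV, ← Finset.sum_div]
    rw [Finset.sum_comm, le_div_iff₀ hfac]
    linarith [h2]
end

section
/- Let 𝒮 = (S_1,…,S_k) be a list of nonempty subsets of a finite set N and let v_𝒮 be the associated game. Then there exists an allocation function f : {1,…,k} → N with f(j) ∈ S_j for every j, such that for every player i ∈ N the number of objects assigned to i satisfies ⌊SV_i(N,v_𝒮)⌋ ≤ |{j : f(j) = i}| ≤ ⌈SV_i(N,v_𝒮)⌉. -/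
open Finset

lemma count_last {N : Type*} [Fintype N] [DecidableEq N]
    (T : Finset N) (hT : T.Nonempty) (i : N) (hi : i ∈ T) :
    ((univ.filter (fun σ : N ≃ Fin (Fintype.card N) =>
        ∀ t ∈ T, t ≠ i → σ t < σ i)).card : ℕ) * T.card
      = (Fintype.card N).factorial := by
  classical
  set n := Fintype.card N
  -- the "argmax" map
  set M : (N ≃ Fin n) → N := fun σ => σ.symm ((T.image σ).max' ((hT.image σ))) with hM
  have hMmem : ∀ σ, M σ ∈ T := by
    intro σ
    have h := (T.image σ).max'_mem (hT.image σ)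
    rw [mem_image] at h
    obtain ⟨t, ht, hts⟩ := h
    simpa [hM, ← hts] using ht
  have hfiber : ∀ a ∈ T, (univ.filter fun σ : N ≃ Fin n => M σ = a)
      = univ.filter (fun σ => ∀ t ∈ T, t ≠ a → σ t < σ a) := by
    intro a ha
    ext σ
    simp only [mem_filter, mem_univ, true_and]
    constructor
    · intro h t ht hta
      have h1 : σ t ≤ (T.image σ).max' (hT.image σ) := le_max' _ _ (mem_image_of_mem σ ht)
      have h2 : σ (M σ) = (T.image σ).max' (hT.image σ) := σ.apply_symm_apply _
      rw [h] at h2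
      rw [← h2] at h1
      exact lt_of_le_of_ne h1 (fun he => hta (σ.injective he))
    · intro h
      have h2 : (T.image σ).max' (hT.image σ) = σ a := by
        have hmm := (T.image σ).max'_mem (hT.image σ)
        rw [mem_image] at hmm
        obtain ⟨t, ht, hts⟩ := hmm
        rcases eq_or_ne t a with rfl | hta
        · exact hts.symm ▸ rfl
        · exact absurd (hts ▸ le_max' _ _ (mem_image_of_mem σ ha)) (not_le.2 (hts ▸ h t ht hta))
      simp [hM, h2]
  -- all fibers have equal cardinality
  have hcardeq : ∀ a ∈ T, (univ.filter fun σ : N ≃ Fin n => M σ = a).card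
      = (univ.filter fun σ : N ≃ Fin n => M σ = i).card := by
    intro a ha
    rcases eq_or_ne a i with rfl | hai
    · rfl
    rw [hfiber a ha, hfiber i hi]
    apply Finset.card_nbij' (fun σ => (Equiv.swap a i).trans σ) (fun σ => (Equiv.swap a i).trans σ)
    · intro σ hσ
      simp only [Finset.mem_coe, mem_filter, mem_univ, true_and] at hσ ⊢
      intro t ht hti
      simp only [Equiv.trans_apply, Equiv.swap_apply_right]
      rcases eq_or_ne t a with rfl | hta
      · rw [Equiv.swap_apply_left]
        exact hσ i hi (Ne.symm hai)
      · rw [Equiv.swap_apply_of_ne_of_ne hta hti]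
        exact hσ t ht hta
    · intro σ hσ
      simp only [Finset.mem_coe, mem_filter, mem_univ, true_and] at hσ ⊢
      intro t ht hta
      simp only [Equiv.trans_apply, Equiv.swap_apply_left]
      rcases eq_or_ne t i with rfl | hti
      · rw [Equiv.swap_apply_right]
        exact hσ a ha hai
      · rw [Equiv.swap_apply_of_ne_of_ne hta hti]
        exact hσ t ht hti
    · intro σ _; ext t; simp [← Equiv.trans_assoc]
    · intro σ _; ext t; simp [← Equiv.trans_assoc]
  have hsum : (univ : Finset (N ≃ Fin n)).card
      = ∑ a ∈ T, (univ.filter fun σ : N ≃ Fin n => M σ = a).card :=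
    Finset.card_eq_sum_card_fiberwise (fun σ _ => hMmem σ)
  have : (univ : Finset (N ≃ Fin n)).card
      = T.card * (univ.filter fun σ : N ≃ Fin n => M σ = i).card := by
    rw [hsum, Finset.sum_congr rfl hcardeq, sum_const, smul_eq_mul]
  rw [← hfiber i hi, Nat.mul_comm, ← this, Finset.card_univ]
  exact Fintype.card_equiv (Fintype.equivFin N)


lemma hall_round {N : Type*} [Fintype N] [DecidableEq N]
    (k : ℕ) (𝒮 : Fin k → Finset N) (h𝒮 : ∀ j, (𝒮 j).Nonempty) :
    ∃ f : Fin k → N, (∀ j, f j ∈ 𝒮 j) ∧ ∀ i : N,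
      (⌊∑ j, if i ∈ 𝒮 j then (1:ℝ)/((𝒮 j).card) else 0⌋
          ≤ ((univ.filter (fun j => f j = i)).card : ℤ)) ∧
      (((univ.filter (fun j => f j = i)).card : ℤ)
          ≤ ⌈∑ j, if i ∈ 𝒮 j then (1:ℝ)/((𝒮 j).card) else 0⌉) := by
  classical
  set x : N → ℝ := fun i => ∑ j, if i ∈ 𝒮 j then (1:ℝ)/((𝒮 j).card) else 0 with hxdef
  have hx0 : ∀ i, 0 ≤ x i := by
    intro i
    refine Finset.sum_nonneg (fun j _ => ?_)
    split <;> positivity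
  set b : N → ℕ := fun i => (⌊x i⌋).toNat with hbdef
  set c : N → ℕ := fun i => (⌈x i⌉).toNat with hcdef
  have hbZ : ∀ i, (b i : ℤ) = ⌊x i⌋ := fun i =>
    Int.toNat_of_nonneg (Int.floor_nonneg.2 (hx0 i))
  have hcZ : ∀ i, (c i : ℤ) = ⌈x i⌉ := fun i =>
    Int.toNat_of_nonneg (Int.ceil_nonneg (hx0 i))
  have hbR : ∀ i, (b i : ℝ) ≤ x i := by
    intro i
    have := Int.floor_le (x i)
    rw [← hbZ i] at this
    exact_mod_cast this
  have hxc : ∀ i, x i ≤ (c i : ℝ) := by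
    intro i
    have := Int.le_ceil (x i)
    rw [← hcZ i] at this
    exact_mod_cast this
  have hbc : ∀ i, b i ≤ c i := by
    intro i
    have : (b i : ℝ) ≤ (c i : ℝ) := le_trans (hbR i) (hxc i)
    exact_mod_cast this
  have hone : ∀ j, ∀ (U : Finset N), 𝒮 j ⊆ U →
      (∑ i ∈ U, if i ∈ 𝒮 j then (1:ℝ)/((𝒮 j).card) else 0) = 1 := by
    intro j U hU
    rw [Finset.sum_ite_mem, Finset.inter_eq_right.2 hU, Finset.sum_const, nsmul_eq_mul,
      mul_one_div, div_self]
    exact_mod_cast (Finset.card_pos.2 (h𝒮 j)).ne'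
  have hsumx : ∑ i, x i = (k : ℝ) := by
    rw [hxdef]
    rw [Finset.sum_comm]
    rw [Finset.sum_congr rfl (fun j _ => hone j univ (Finset.subset_univ _))]
    simp
  have key : ∀ s : Finset (Fin k), (s.card : ℝ) ≤ ∑ i ∈ s.biUnion 𝒮, x i := by
    intro s
    have h1 : (s.card : ℝ) = ∑ j ∈ s, (1:ℝ) := by simp
    rw [h1]
    have h2 : ∀ j ∈ s, (1:ℝ) = ∑ i ∈ s.biUnion 𝒮, (if i ∈ 𝒮 j then (1:ℝ)/((𝒮 j).card) else 0) :=
      fun j hj => (hone j _ (Finset.subset_biUnion_of_mem 𝒮 hj)).symm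
    rw [Finset.sum_congr rfl h2, Finset.sum_comm]
    refine Finset.sum_le_sum (fun i _ => ?_)
    refine Finset.sum_le_sum_of_subset_of_nonneg (Finset.subset_univ s) (fun j _ _ => ?_)
    split <;> positivity
  have hkc : k ≤ ∑ i, c i := by
    have : (k : ℝ) ≤ ∑ i, (c i : ℝ) := by
      rw [← hsumx]; exact Finset.sum_le_sum (fun i _ => hxc i)
    exact_mod_cast this
  set d : ℕ := (∑ i, c i) - k with hddef
  have hd : k + d = ∑ i, c i := by omega
  set opt : Finset (N × ℕ) := univ.biUnion (fun i => {i} ×ˢ Finset.Ico (b i) (c i)) with hoptdef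
  set t : (Fin k ⊕ Fin d) → Finset (N × ℕ) :=
    Sum.elim (fun j => (𝒮 j).biUnion (fun i => {i} ×ˢ Finset.range (c i))) (fun _ => opt)
    with htdef
  -- card of biUnion of slot-sets
  have cardU : ∀ (U : Finset N) (g : N → Finset ℕ),
      (U.biUnion (fun i => {i} ×ˢ g i)).card = ∑ i ∈ U, (g i).card := by
    intro U g
    rw [Finset.card_biUnion]
    · simp
    · intro i _ i' _ hii'
      rw [Function.onFun, Finset.disjoint_left]
      rintro ⟨a, m⟩ hp hp'
      simp only [Finset.mem_product, Finset.mem_singleton] at hp hp'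
      exact hii' (hp.1.symm.trans hp'.1)
  -- Hall's condition
  have hall : ∀ s : Finset (Fin k ⊕ Fin d), s.card ≤ (s.biUnion t).card := by
    intro s
    set s₁ := s.toLeft with hs₁
    set s₂ := s.toRight with hs₂
    set U : Finset N := s₁.biUnion 𝒮 with hU
    have hcard_s : s.card = s₁.card + s₂.card := (Finset.card_toLeft_add_card_toRight).symm
    have hs1key : (s₁.card : ℝ) ≤ ∑ i ∈ U, x i := key s₁
    -- the union always contains the slots of players in U
    have hsub1 : U.biUnion (fun i => {i} ×ˢ Finset.range (c i)) ⊆ s.biUnion t := by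
      intro p hp
      rw [Finset.mem_biUnion] at hp
      obtain ⟨i, hi, hpi⟩ := hp
      rw [hU, Finset.mem_biUnion] at hi
      obtain ⟨j, hj, hij⟩ := hi
      rw [Finset.mem_biUnion]
      exact ⟨Sum.inl j, Finset.mem_toLeft.1 hj, Finset.mem_biUnion.2 ⟨i, hij, hpi⟩⟩
    by_cases hs2 : s₂ = ∅
    · -- no dummies
      have hcard : s.card = s₁.card := by rw [hcard_s, hs2]; simp
      rw [hcard]
      have h1 : s₁.card ≤ ∑ i ∈ U, c i := by
        have : (s₁.card : ℝ) ≤ ∑ i ∈ U, (c i : ℝ) :=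
          le_trans hs1key (Finset.sum_le_sum (fun i _ => hxc i))
        exact_mod_cast this
      calc s₁.card ≤ ∑ i ∈ U, c i := h1
        _ = (U.biUnion (fun i => {i} ×ˢ Finset.range (c i))).card := by
            rw [cardU]; simp
        _ ≤ (s.biUnion t).card := Finset.card_le_card hsub1
    · -- some dummy present
      obtain ⟨w, hw⟩ := Finset.nonempty_iff_ne_empty.2 hs2
      have hsub2 : univ.biUnion (fun i => {i} ×ˢ
          (if i ∈ U then Finset.range (c i) else Finset.Ico (b i) (c i))) ⊆ s.biUnion t := by
        intro p hp
        rw [Finset.mem_biUnion] at hp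
        obtain ⟨i, _, hpi⟩ := hp
        by_cases hiU : i ∈ U
        · rw [if_pos hiU] at hpi
          exact hsub1 (Finset.mem_biUnion.2 ⟨i, hiU, hpi⟩)
        · rw [if_neg hiU] at hpi
          rw [Finset.mem_biUnion]
          refine ⟨Sum.inr w, Finset.mem_toRight.1 hw, ?_⟩
          simp only [htdef, Sum.elim_inr, hoptdef]
          exact Finset.mem_biUnion.2 ⟨i, Finset.mem_univ i, hpi⟩
      have hcardB : (univ.biUnion (fun i => {i} ×ˢ
          (if i ∈ U then Finset.range (c i) else Finset.Ico (b i) (c i)))).card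
          = ∑ i, (if i ∈ U then c i else c i - b i) := by
        rw [cardU]
        refine Finset.sum_congr rfl (fun i _ => ?_)
        split <;> simp [Nat.card_Ico]
      -- nat inequality (A): s₁.card + ∑ (b over complement of U) ≤ k
      have hA : s₁.card + (∑ i, if i ∈ U then 0 else b i) ≤ k := by
        have hAr : (s₁.card : ℝ) + (∑ i, if i ∈ U then 0 else (b i : ℝ)) ≤ (k : ℝ) := by
          have h2 : (∑ i, if i ∈ U then 0 else (b i:ℝ)) ≤ ∑ i, (if i ∈ U then 0 else x i) := by
            refine Finset.sum_le_sum (fun i _ => ?_)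
            split
            · exact le_refl 0
            · exact hbR i
          have h3 : (∑ i ∈ U, x i) + (∑ i, if i ∈ U then 0 else x i) = ∑ i, x i := by
            rw [show (∑ i ∈ U, x i) = ∑ i, if i ∈ U then x i else 0 by
              rw [Finset.sum_ite_mem, Finset.univ_inter], ← Finset.sum_add_distrib]
            refine Finset.sum_congr rfl (fun i _ => ?_)
            split <;> ring
          calc (s₁.card : ℝ) + (∑ i, if i ∈ U then 0 else (b i : ℝ))
              ≤ (∑ i ∈ U, x i) + (∑ i, if i ∈ U then 0 else x i) := add_le_add hs1key h2
            _ = ∑ i, x i := h3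
            _ = (k : ℝ) := hsumx
        have : ((s₁.card + (∑ i, if i ∈ U then 0 else b i) : ℕ) : ℝ) ≤ (k:ℝ) := by
          push_cast [apply_ite (Nat.cast : ℕ → ℝ)]
          exact_mod_cast hAr
        exact_mod_cast this
      -- nat identity (B)
      have hB : (∑ i, (if i ∈ U then c i else c i - b i)) + (∑ i, if i ∈ U then 0 else b i)
          = ∑ i, c i := by
        rw [← Finset.sum_add_distrib]
        refine Finset.sum_congr rfl (fun i _ => ?_)
        have := hbc i
        split <;> omega
      have hs2card : s₂.card ≤ d := by
        have := Finset.card_le_univ s₂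
        simpa using this
      have hfin : s.card ≤ ∑ i, (if i ∈ U then c i else c i - b i) := by omega
      exact le_trans hfin (hcardB ▸ Finset.card_le_card hsub2)
  -- apply Hall's theorem
  obtain ⟨f₀, hf₀inj, hf₀mem⟩ := (Finset.all_card_le_biUnion_card_iff_exists_injective t).1 hall
  set allSlots : Finset (N × ℕ) := univ.biUnion (fun i => {i} ×ˢ Finset.range (c i))
    with hallSlots
  have htsub : ∀ z, t z ⊆ allSlots := by
    rintro (j | w) p hp
    · simp only [htdef, Sum.elim_inl, Finset.mem_biUnion] at hp
      obtain ⟨i, _, hpi⟩ := hp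
      exact Finset.mem_biUnion.2 ⟨i, Finset.mem_univ i, hpi⟩
    · simp only [htdef, Sum.elim_inr, hoptdef, Finset.mem_biUnion] at hp
      obtain ⟨i, _, hpi⟩ := hp
      simp only [Finset.mem_product, Finset.mem_singleton, Finset.mem_Ico] at hpi
      refine Finset.mem_biUnion.2 ⟨i, Finset.mem_univ i, ?_⟩
      simp only [Finset.mem_product, Finset.mem_singleton, Finset.mem_range]
      exact ⟨hpi.1, hpi.2.2⟩
  have hcardAll : allSlots.card = k + d := by
    rw [hallSlots, cardU]; simp [hd]
  have himg : Finset.image f₀ univ = allSlots := by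
    apply Finset.eq_of_subset_of_card_le
    · intro p hp
      rw [Finset.mem_image] at hp
      obtain ⟨z, _, rfl⟩ := hp
      exact htsub z (hf₀mem z)
    · rw [hcardAll, Finset.card_image_of_injective _ hf₀inj]
      simp
  have hsurj : ∀ p ∈ allSlots, ∃ z, f₀ z = p := by
    intro p hp
    rw [← himg, Finset.mem_image] at hp
    obtain ⟨z, _, hz⟩ := hp
    exact ⟨z, hz⟩
  -- the allocation
  refine ⟨fun j => (f₀ (Sum.inl j)).1, ?_, ?_⟩
  · intro j
    have := hf₀mem (Sum.inl j)
    simp only [htdef, Sum.elim_inl, Finset.mem_biUnion] at this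
    obtain ⟨i, hi, hpi⟩ := this
    rw [Finset.mem_product, Finset.mem_singleton] at hpi
    show (f₀ (Sum.inl j)).1 ∈ 𝒮 j
    rw [hpi.1]; exact hi
  intro i
  have hslot : ∀ j : Fin k, (f₀ (Sum.inl j)).1 = i → (f₀ (Sum.inl j)).2 < c i := by
    intro j hji
    have := hf₀mem (Sum.inl j)
    simp only [htdef, Sum.elim_inl, Finset.mem_biUnion] at this
    obtain ⟨i', _, hpi⟩ := this
    rw [Finset.mem_product, Finset.mem_singleton, Finset.mem_range] at hpi
    rw [← hji, hpi.1]
    exact hpi.2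
  -- upper bound
  have hupper : (univ.filter (fun j => (f₀ (Sum.inl j)).1 = i)).card ≤ c i := by
    have : (univ.filter (fun j => (f₀ (Sum.inl j)).1 = i)).card ≤ (Finset.range (c i)).card := by
      apply Finset.card_le_card_of_injOn (fun j => (f₀ (Sum.inl j)).2)
      · intro j hj
        rw [Finset.mem_coe, Finset.mem_filter] at hj
        exact Finset.mem_range.2 (hslot j hj.2)
      · intro j hj j' hj' hjj'
        rw [Finset.mem_coe, Finset.mem_filter] at hj hj'
        have : f₀ (Sum.inl j) = f₀ (Sum.inl j') :=
          Prod.ext (hj.2.trans hj'.2.symm) hjj'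
        exact Sum.inl.inj (hf₀inj this)
    simpa using this
  -- lower bound
  have hlower : b i ≤ (univ.filter (fun j => (f₀ (Sum.inl j)).1 = i)).card := by
    rcases Nat.eq_zero_or_pos (b i) with hb0 | hb0
    · omega
    have hk0 : 0 < k := by
      by_contra hk
      have hk0 : k = 0 := by omega
      have : x i = 0 := by
        rw [hxdef]
        subst hk0
        simp
      have : b i = 0 := by
        rw [hbdef]
        simp [this]
      omega
    have hexj : ∀ m ∈ Finset.range (b i), ∃ j : Fin k, f₀ (Sum.inl j) = (i, m) := by
      intro m hm
      rw [Finset.mem_range] at hm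
      have hmem : (i, m) ∈ allSlots := by
        refine Finset.mem_biUnion.2 ⟨i, Finset.mem_univ i, ?_⟩
        exact Finset.mem_product.2 ⟨Finset.mem_singleton_self i,
          Finset.mem_range.2 (lt_of_lt_of_le hm (hbc i))⟩
      obtain ⟨z, hz⟩ := hsurj _ hmem
      rcases z with j | w
      · exact ⟨j, hz⟩
      · exfalso
        have := hf₀mem (Sum.inr w)
        rw [hz] at this
        simp only [htdef, Sum.elim_inr, hoptdef, Finset.mem_biUnion] at this
        obtain ⟨i', _, hpi⟩ := this
        simp only [Finset.mem_product, Finset.mem_singleton, Finset.mem_Ico] at hpi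
        obtain ⟨rfl, h1, h2⟩ := hpi
        omega
    have hne : Nonempty (Fin k) := ⟨⟨0, hk0⟩⟩
    set F : ℕ → Fin k := fun m =>
      if h : ∃ j : Fin k, f₀ (Sum.inl j) = (i, m) then h.choose else Classical.arbitrary _
      with hF
    have : (Finset.range (b i)).card ≤ (univ.filter (fun j => (f₀ (Sum.inl j)).1 = i)).card := by
      apply Finset.card_le_card_of_injOn F
      · intro m hm
        obtain h := hexj m hm
        rw [Finset.mem_coe, Finset.mem_filter]
        refine ⟨Finset.mem_univ _, ?_⟩
        rw [hF]
        simp only [dif_pos h]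
        rw [h.choose_spec]
      · intro m hm m' hm' hmm'
        obtain h := hexj m (by simpa using hm)
        obtain h' := hexj m' (by simpa using hm')
        have e1 : f₀ (Sum.inl (F m)) = (i, m) := by rw [hF]; simp only [dif_pos h]; exact h.choose_spec
        have e2 : f₀ (Sum.inl (F m')) = (i, m') := by rw [hF]; simp only [dif_pos h']; exact h'.choose_spec
        rw [hmm'] at e1
        rw [e1] at e2
        exact congrArg Prod.snd e2
    simpa using this
  constructor
  · rw [← hbZ i]
    exact_mod_cast hlower
  · rw [← hcZ i]
    exact_mod_cast hupper

lemma SV_eq {N : Type*} [Fintype N] [DecidableEq N]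
    (k : ℕ) (𝒮 : Fin k → Finset N) (h𝒮 : ∀ j, (𝒮 j).Nonempty) (i : N) :
    SV (fun S => ((Finset.univ.filter (fun j => 𝒮 j ⊆ S)).card : ℝ)) i
      = ∑ j, if i ∈ 𝒮 j then (1:ℝ)/((𝒮 j).card) else 0 := by
  classical
  have hfact : ((Fintype.card N).factorial : ℝ) ≠ 0 := by
    exact_mod_cast (Nat.factorial_pos _).ne'
  have hcard : ∀ S : Finset N, ((Finset.univ.filter (fun j => 𝒮 j ⊆ S)).card : ℝ)
      = ∑ j, if 𝒮 j ⊆ S then (1:ℝ) else 0 := by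
    intro S
    rw [Finset.card_filter, Nat.cast_sum]
    simp
  have hterm : ∀ σ : N ≃ Fin (Fintype.card N),
      ((Finset.univ.filter (fun j => 𝒮 j ⊆ insert i (preSet σ i))).card : ℝ)
        - ((Finset.univ.filter (fun j => 𝒮 j ⊆ preSet σ i)).card : ℝ)
      = ∑ j, if (i ∈ 𝒮 j ∧ ∀ t ∈ 𝒮 j, t ≠ i → σ t < σ i) then (1:ℝ) else 0 := by
    intro σ
    have hiP : i ∉ preSet σ i := by simp [preSet]
    rw [hcard, hcard, ← Finset.sum_sub_distrib]
    refine Finset.sum_congr rfl (fun j _ => ?_)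
    have hmem : ∀ t, t ∈ preSet σ i ↔ σ t < σ i := by
      intro t; simp [preSet]
    by_cases hij : i ∈ 𝒮 j
    · have hnsub : ¬ (𝒮 j ⊆ preSet σ i) := fun h => hiP (h hij)
      rw [if_neg hnsub, sub_zero]
      congr 1
      apply propext
      constructor
      · intro h
        refine ⟨hij, fun t ht hti => ?_⟩
        rcases Finset.mem_insert.1 (h ht) with h' | h'
        · exact absurd h' hti
        · exact (hmem t).1 h'
      · rintro ⟨-, h⟩ t ht
        rcases eq_or_ne t i with rfl | hti
        · exact Finset.mem_insert_self _ _
        · exact Finset.mem_insert_of_mem ((hmem t).2 (h t ht hti))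
    · have : (𝒮 j ⊆ insert i (preSet σ i)) ↔ (𝒮 j ⊆ preSet σ i) :=
        Finset.subset_insert_iff_of_notMem hij
      rw [if_congr this rfl rfl, sub_self]
      rw [if_neg (fun h => hij h.1)]
  rw [SV]
  have hnum : (∑ σ : N ≃ Fin (Fintype.card N),
      (((Finset.univ.filter (fun j => 𝒮 j ⊆ insert i (preSet σ i))).card : ℝ)
        - ((Finset.univ.filter (fun j => 𝒮 j ⊆ preSet σ i)).card : ℝ)))
      = ∑ j, if i ∈ 𝒮 j then (((Fintype.card N).factorial : ℝ)/((𝒮 j).card)) else 0 := by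
    rw [Finset.sum_congr rfl (fun σ _ => hterm σ), Finset.sum_comm]
    refine Finset.sum_congr rfl (fun j _ => ?_)
    by_cases hij : i ∈ 𝒮 j
    · rw [if_pos hij]
      have : (∑ σ : N ≃ Fin (Fintype.card N),
          if (i ∈ 𝒮 j ∧ ∀ t ∈ 𝒮 j, t ≠ i → σ t < σ i) then (1:ℝ) else 0)
          = ((univ.filter (fun σ : N ≃ Fin (Fintype.card N) =>
              ∀ t ∈ 𝒮 j, t ≠ i → σ t < σ i)).card : ℝ) := by
        rw [Finset.card_filter, Nat.cast_sum]
        simp [hij]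
      rw [this, eq_div_iff]
      · exact_mod_cast count_last (𝒮 j) (h𝒮 j) i hij
      · exact_mod_cast (Finset.card_pos.2 (h𝒮 j)).ne'
    · rw [if_neg hij]
      refine Finset.sum_eq_zero (fun σ _ => ?_)
      rw [if_neg (fun h => hij h.1)]
  rw [hnum, Finset.sum_div]
  refine Finset.sum_congr rfl (fun j _ => ?_)
  by_cases hij : i ∈ 𝒮 j
  · rw [if_pos hij, if_pos hij]
    rw [div_div, mul_comm, ← div_div, div_self hfact]
  · rw [if_neg hij, if_neg hij, zero_div]


theorem stmt14 {N : Type*} [Fintype N] [DecidableEq N] [Nonempty N]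
    (k : ℕ) (𝒮 : Fin k → Finset N) (h𝒮 : ∀ j, (𝒮 j).Nonempty) :
    ∃ f : Fin k → N, (∀ j, f j ∈ 𝒮 j) ∧
      ∀ i : N,
        ⌊SV (fun S => ((Finset.univ.filter (fun j => 𝒮 j ⊆ S)).card : ℝ)) i⌋ ≤
            ((Finset.univ.filter (fun j => f j = i)).card : ℤ) ∧
          ((Finset.univ.filter (fun j => f j = i)).card : ℤ) ≤
            ⌈SV (fun S => ((Finset.univ.filter (fun j => 𝒮 j ⊆ S)).card : ℝ)) i⌉ := by
  obtain ⟨f, hf, hb⟩ := hall_round k 𝒮 h𝒮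
  refine ⟨f, hf, fun i => ?_⟩
  rw [SV_eq k 𝒮 h𝒮 i]
  exact hb i
end

section
/- Let 𝒮 = (S_1,…,S_k) be a list of nonempty subsets of a finite set N, let v_𝒮 be the associated game, and let x ∈ ℤ^N be an integer payoff vector with x_i ≥ 0 for all i that belongs to the core of (N, v_𝒮). Then there exists an allocation function f : {1,…,k} → N with f(j) ∈ S_j for every j, such that |{j : f(j) = i}| = x_i for every player i ∈ N. -/
/- Give player `i` exactly `x i` slots. The core inequalities say that any `m` of the sets `S_j`
together contain at least `m` slots, so by Hall's theorem the sets can be matched injectively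
to slots inside them; since `∑ x = v(N) = k`, every slot is used, so player `i` is chosen
exactly `x i` times. -/

open Finset

section CapacitatedHall

variable {ι α : Type*} [Fintype ι] [DecidableEq α]

theorem exists_mem_forall_card_fiber_le (t : ι → Finset α) (n : α → ℕ)
    (h : ∀ J : Finset ι, #J ≤ ∑ i ∈ J.biUnion t, n i) :
    ∃ f : ι → α, (∀ j, f j ∈ t j) ∧ ∀ i, #{j | f j = i} ≤ n i := by
  let slots : ι → Finset (Σ i : α, Fin (n i)) := fun j => (t j).sigma fun _ => univ
  have hall : ∀ J : Finset ι, #J ≤ #(J.biUnion slots) := fun J => by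
    have : J.biUnion slots = (J.biUnion t).sigma fun _ => univ := by
      ext p; simp [slots]
    simpa [this] using h J
  obtain ⟨g, hg_inj, hg_mem⟩ := (all_card_le_biUnion_card_iff_exists_injective slots).mp hall
  refine ⟨fun j => (g j).1, fun j => by simpa [slots] using hg_mem j, fun i => ?_⟩
  calc #{j | (g j).1 = i} ≤ #(({i} : Finset α).sigma fun i => (univ : Finset (Fin (n i)))) :=
        card_le_card_of_injOn g (fun j hj => by simpa using hj) hg_inj.injOn
    _ = n i := by simp

theorem exists_mem_forall_card_fiber_eq [Fintype α] (t : ι → Finset α) (n : α → ℕ)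
    (h : ∀ J : Finset ι, #J ≤ ∑ i ∈ J.biUnion t, n i) (hn : ∑ i, n i = Fintype.card ι) :
    ∃ f : ι → α, (∀ j, f j ∈ t j) ∧ ∀ i, #{j | f j = i} = n i := by
  obtain ⟨f, hf_mem, hf_le⟩ := exists_mem_forall_card_fiber_le t n h
  have hfibers : ∑ i, #{j | f j = i} = ∑ i, n i := by
    rw [hn, ← card_univ, card_eq_sum_card_fiberwise fun j _ => mem_univ (f j)]
  exact ⟨f, hf_mem, fun i =>
    (sum_eq_sum_iff_of_le fun i _ => hf_le i).1 hfibers i (mem_univ i)⟩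

end CapacitatedHall

section CountingGame

variable {ι N : Type*} [Fintype ι] [Fintype N] [DecidableEq N]

/-- The game `v_𝒮`. -/
def countingGame (𝒮 : ι → Finset N) (S : Finset N) : ℝ := #{j | 𝒮 j ⊆ S}

variable {𝒮 : ι → Finset N} {x : N → ℝ}

theorem InCore.sum_eq_card (hx : InCore (countingGame 𝒮) x) : ∑ i, x i = Fintype.card ι := by
  simp [hx.1, countingGame]

theorem InCore.card_le_sum_biUnion (hx : InCore (countingGame 𝒮) x) (J : Finset ι) :
    (#J : ℝ) ≤ ∑ i ∈ J.biUnion 𝒮, x i :=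
  calc (#J : ℝ) ≤ countingGame 𝒮 (J.biUnion 𝒮) := by
        unfold countingGame
        exact_mod_cast card_le_card fun j hj =>
          mem_filter.2 ⟨mem_univ j, subset_biUnion_of_mem 𝒮 hj⟩
    _ ≤ _ := hx.2 _

theorem exists_allocation_of_inCore {n : N → ℕ}
    (hn : InCore (countingGame 𝒮) (fun i => n i)) :
    ∃ f : ι → N, (∀ j, f j ∈ 𝒮 j) ∧ ∀ i, #{j | f j = i} = n i :=
  exists_mem_forall_card_fiber_eq 𝒮 n (fun J => by exact_mod_cast hn.card_le_sum_biUnion J)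
    (by exact_mod_cast hn.sum_eq_card)

end CountingGame

theorem stmt15_general {N : Type*} [Fintype N] [DecidableEq N]
    (k : ℕ) (𝒮 : Fin k → Finset N)
    (x : N → ℤ) (hx0 : ∀ i, 0 ≤ x i)
    (hx : InCore (fun S => ((Finset.univ.filter (fun j => 𝒮 j ⊆ S)).card : ℝ))
      (fun i => (x i : ℝ))) :
    ∃ f : Fin k → N, (∀ j, f j ∈ 𝒮 j) ∧
      ∀ i : N, ((Finset.univ.filter (fun j => f j = i)).card : ℤ) = x i := by
  lift x to N → ℕ using hx0
  have hx : InCore (countingGame 𝒮) (fun i => (x i : ℝ)) := by exact_mod_cast hx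
  obtain ⟨f, hf_mem, hf_card⟩ := exists_allocation_of_inCore hx
  exact ⟨f, hf_mem, fun i => congrArg Nat.cast (hf_card i)⟩

theorem stmt15 {N : Type*} [Fintype N] [DecidableEq N] [Nonempty N]
    (k : ℕ) (𝒮 : Fin k → Finset N) (h𝒮 : ∀ j, (𝒮 j).Nonempty)
    (x : N → ℤ) (hx0 : ∀ i, 0 ≤ x i)
    (hx : InCore (fun S => ((Finset.univ.filter (fun j => 𝒮 j ⊆ S)).card : ℝ))
      (fun i => (x i : ℝ))) :
    ∃ f : Fin k → N, (∀ j, f j ∈ 𝒮 j) ∧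
      ∀ i : N, ((Finset.univ.filter (fun j => f j = i)).card : ℤ) = x i :=
  stmt15_general k 𝒮 x hx0 hx
end

section
/- Let (N,v) be a coalitional game with |N| = n and let i, j ∈ N be two distinct players. Then the Shapley value matrix entry satisfies Σ_{S ⊆ N, {i,j} ⊆ S} Δ_v(S)/|S|² = (1/n!)·Σ_{π permutation of N} (v(S^π_i ∪ {i}) − v(S^π_i) − v((S^π_i ∪ {i})∖{j}) + v(S^π_i ∖ {j})) · Σ_{t=|S^π_i|+1}^{n} 1/t. -/
open Finset

lemma dividend_insert_aux {α : Type*} [DecidableEq α] (v : Finset α → ℝ) {a : α} {T : Finset α}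
    (ha : a ∉ T) :
    dividend v (insert a T) = dividend (fun X => v (insert a X)) T - dividend v T := by
  unfold dividend
  rw [Finset.sum_powerset_insert ha, card_insert_of_notMem ha]
  have h1 : ∀ U ∈ T.powerset, (-1 : ℝ) ^ (T.card + 1 - U.card) * v U
      = -((-1 : ℝ) ^ (T.card - U.card) * v U) := by
    intro U hU
    rw [mem_powerset] at hU
    have : T.card + 1 - U.card = (T.card - U.card) + 1 :=
      Nat.succ_sub (card_le_card hU)
    rw [this, pow_succ]
    ring
  have h2 : ∀ U ∈ T.powerset, (-1 : ℝ) ^ (T.card + 1 - (insert a U).card) * v (insert a U)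
      = (-1 : ℝ) ^ (T.card - U.card) * v (insert a U) := by
    intro U hU
    rw [mem_powerset] at hU
    rw [card_insert_of_notMem (fun h => ha (hU h)), Nat.add_sub_add_right]
  rw [Finset.sum_congr rfl h1, Finset.sum_congr rfl h2, Finset.sum_neg_distrib]
  ring

theorem sum_dividend_aux {α : Type*} [DecidableEq α] (S : Finset α) :
    ∀ v : Finset α → ℝ, ∑ T ∈ S.powerset, dividend v T = v S := by
  classical
  induction S using Finset.induction_on with
  | empty => intro v; simp [dividend]
  | insert _ _ ha ih =>
    intro v
    rename_i a S
    rw [Finset.sum_powerset_insert ha]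
    have : ∑ T ∈ S.powerset, dividend v (insert a T)
        = ∑ T ∈ S.powerset, (dividend (fun X => v (insert a X)) T - dividend v T) := by
      refine Finset.sum_congr rfl fun T hT => ?_
      exact dividend_insert_aux v (fun h => ha ((mem_powerset.mp hT) h))
    rw [this, Finset.sum_sub_distrib, ih, ih]
    ring

lemma marginal_eq_aux {α : Type*} [DecidableEq α] (v : Finset α → ℝ) {i : α} {P : Finset α}
    (hi : i ∉ P) :
    v (insert i P) - v P = ∑ T ∈ P.powerset, dividend v (insert i T) := by
  rw [← sum_dividend_aux (insert i P) v, Finset.sum_powerset_insert hi, sum_dividend_aux P v]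
  ring

lemma powerset_erase_aux {α : Type*} [DecidableEq α] (P : Finset α) (j : α) :
    (P.erase j).powerset = P.powerset.filter (fun T => j ∉ T) := by
  ext T
  simp [Finset.subset_erase, and_comm]

lemma bracket_eq_aux {α : Type*} [DecidableEq α] (v : Finset α → ℝ) {i j : α} {P : Finset α}
    (hi : i ∉ P) (hij : i ≠ j) :
    v (insert i P) - v P - v ((insert i P).erase j) + v (P.erase j)
      = ∑ T ∈ P.powerset.filter (fun T => j ∈ T), dividend v (insert i T) := by
  have h1 : (insert i P).erase j = insert i (P.erase j) := Finset.erase_insert_of_ne hij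
  have h2 : i ∉ P.erase j := fun h => hi (Finset.mem_of_mem_erase h)
  have e1 := marginal_eq_aux v hi
  have e2 := marginal_eq_aux v h2
  rw [h1]
  have : v (insert i P) - v P - v (insert i (P.erase j)) + v (P.erase j)
      = (v (insert i P) - v P) - (v (insert i (P.erase j)) - v (P.erase j)) := by ring
  rw [this, e1, e2, powerset_erase_aux,
    ← Finset.sum_filter_add_sum_filter_not P.powerset (fun T => j ∈ T)
      (fun T => dividend v (insert i T))]
  ring

lemma card_extensions_aux {α β : Type*} [Fintype α] [Fintype β] [DecidableEq α] [DecidableEq β]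
    (h : Fintype.card α = Fintype.card β) (A : Finset α) (g : α → β)
    (hg : Set.InjOn g A) :
    (Finset.univ.filter (fun σ : α ≃ β => ∀ x ∈ A, σ x = g x)).card
      = Nat.factorial (Fintype.card α - A.card) := by
  classical
  rw [← Fintype.card_subtype]
  set s : Set α := ↑A with hs
  let e₀ : s ≃ (g '' s : Set β) := Equiv.Set.imageOfInjOn g s hg
  have E : {σ : α ≃ β // ∀ x : s, σ x = e₀ x} ≃ ((sᶜ : Set α) ≃ ((g '' s)ᶜ : Set β)) :=
    Equiv.Set.compl e₀
  have E2 : {σ : α ≃ β // ∀ x ∈ A, σ x = g x} ≃ {σ : α ≃ β // ∀ x : s, σ x = e₀ x} := by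
    apply Equiv.subtypeEquivRight
    intro σ
    constructor
    · intro hσ x
      exact hσ x x.2
    · intro hσ x hx
      exact hσ ⟨x, hx⟩
  rw [Fintype.card_congr (E2.trans E)]
  have hA : Fintype.card s = A.card := by simp [hs]
  have hcs : Fintype.card (sᶜ : Set α) = Fintype.card α - A.card := by
    rw [Fintype.card_compl_set, hA]
  have hct : Fintype.card ((g '' s)ᶜ : Set β) = Fintype.card α - A.card := by
    rw [Fintype.card_compl_set, ← h, Fintype.card_congr e₀.symm, hA]
  rw [Fintype.card_equiv (Fintype.equivOfCardEq (hcs.trans hct.symm)), hcs]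

lemma count_lemma_aux {N : Type*} [Fintype N] [DecidableEq N]
    (i : N) (B : Finset N) (hiB : i ∉ B) (p : Fin (Fintype.card N)) :
    (Finset.univ.filter
        (fun σ : N ≃ Fin (Fintype.card N) => σ i = p ∧ ∀ k ∈ B, σ k < p)).card
      = (p : ℕ).descFactorial B.card
          * Nat.factorial (Fintype.card N - (B.card + 1)) := by
  classical
  set C := Finset.univ.filter
      (fun σ : N ≃ Fin (Fintype.card N) => σ i = p ∧ ∀ k ∈ B, σ k < p) with hC
  set f : (N ≃ Fin (Fintype.card N)) → ({k // k ∈ B} → Fin (Fintype.card N)) :=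
      fun σ x => σ x.1 with hf
  set t := Finset.univ.filter
      (fun e : {k // k ∈ B} → Fin (Fintype.card N) =>
        Function.Injective e ∧ ∀ x, e x < p) with ht
  have H : ∀ σ ∈ C, f σ ∈ t := by
    intro σ hσ
    rw [hC, mem_filter] at hσ
    rw [ht, mem_filter]
    exact ⟨mem_univ _, fun a b hab => Subtype.ext (σ.injective hab),
      fun x => hσ.2.2 x.1 x.2⟩
  rw [Finset.card_eq_sum_card_fiberwise H]
  have hfib : ∀ e ∈ t, (C.filter (fun σ => f σ = e)).card
      = Nat.factorial (Fintype.card N - (B.card + 1)) := by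
    intro e he
    rw [ht, mem_filter] at he
    set g : N → Fin (Fintype.card N) := fun k => if h : k ∈ B then e ⟨k, h⟩ else p with hg
    have hgB : ∀ k (hk : k ∈ B), g k = e ⟨k, hk⟩ := fun k hk => dif_pos hk
    have hgi : g i = p := dif_neg hiB
    have hset : C.filter (fun σ => f σ = e)
        = Finset.univ.filter
            (fun σ : N ≃ Fin (Fintype.card N) => ∀ x ∈ insert i B, σ x = g x) := by
      ext σ
      simp only [hC, mem_filter, mem_univ, true_and, and_assoc]
      constructor
      · rintro ⟨h1, h2, h3⟩ x hx
        rcases Finset.mem_insert.mp hx with rfl | hxB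
        · rw [hgi, h1]
        · rw [hgB x hxB, ← h3]
      · intro hσ
        have h1 : σ i = p := by rw [hσ i (mem_insert_self i B), hgi]
        have h2 : ∀ k (hk : k ∈ B), σ k = e ⟨k, hk⟩ := by
          intro k hk
          rw [hσ k (mem_insert_of_mem hk), hgB k hk]
        refine ⟨h1, fun k hk => ?_, ?_⟩
        · rw [h2 k hk]
          exact he.2.2 ⟨k, hk⟩
        · funext x
          exact h2 x.1 x.2
    rw [hset]
    have hinj : Set.InjOn g (insert i B : Finset N) := by
      intro x hx y hy hxy
      simp only [Finset.coe_insert, Set.mem_insert_iff, Finset.mem_coe] at hx hy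
      rcases hx with rfl | hx <;> rcases hy with rfl | hy
      · rfl
      · rw [hgi, hgB y hy] at hxy
        exact absurd (hxy ▸ he.2.2 ⟨y, hy⟩) (lt_irrefl p)
      · rw [hgi, hgB x hx] at hxy
        exact absurd (hxy.symm ▸ he.2.2 ⟨x, hx⟩) (lt_irrefl p)
      · rw [hgB x hx, hgB y hy] at hxy
        exact congrArg Subtype.val (he.2.1 hxy)
    have := card_extensions_aux (Fintype.card_fin (Fintype.card N)).symm (insert i B) g hinj
    rw [this, Finset.card_insert_of_notMem hiB]
  rw [Finset.sum_congr rfl hfib, Finset.sum_const, smul_eq_mul]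
  congr 1
  have E : {e : {k // k ∈ B} → Fin (Fintype.card N) //
        Function.Injective e ∧ ∀ x, e x < p}
      ≃ ({k // k ∈ B} ↪ Fin (p : ℕ)) := by
    refine ⟨fun e => ⟨fun x => ⟨(e.1 x : ℕ), e.2.2 x⟩, ?_⟩,
      fun f => ⟨fun x => ⟨(f x : ℕ), lt_trans (f x).2 p.2⟩, ?_, ?_⟩, ?_, ?_⟩
    · intro a b hab
      simp only [Fin.mk.injEq] at hab
      exact e.2.1 (Fin.ext hab)
    · intro a b hab
      simp only [Fin.mk.injEq] at hab
      exact f.injective (Fin.ext hab)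
    · intro x
      exact (f x).2
    · intro e; ext x; rfl
    · intro f; ext x; rfl
  rw [ht, ← Fintype.card_subtype, Fintype.card_congr E, Fintype.card_embedding_eq,
    Fintype.card_fin, Fintype.card_coe]

lemma hockey_aux (k : ℕ) : ∀ t : ℕ, (k+1) * ∑ p ∈ Finset.range t, p.descFactorial k
    = t.descFactorial (k+1)
  | 0 => by simp
  | (t+1) => by
    rw [Finset.sum_range_succ, Nat.mul_add, hockey_aux k t, Nat.succ_descFactorial_succ]
    rcases le_or_gt k t with h | h
    · rw [Nat.descFactorial_succ, ← Nat.add_mul]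
      congr 1
      omega
    · rw [Nat.descFactorial_of_lt h, Nat.descFactorial_eq_zero_iff_lt.mpr (by omega),
        Nat.mul_zero, Nat.mul_zero]

lemma keysum_aux (n s : ℕ) (hs1 : 1 ≤ s) (hsn : s ≤ n) :
    ∑ p ∈ Finset.range n, (∑ t ∈ Finset.Icc (p+1) n, (1:ℝ)/(t:ℝ)) *
        ((p.descFactorial (s-1) * Nat.factorial (n-s) : ℕ) : ℝ)
      = (Nat.factorial n : ℝ) / (s:ℝ)^2 := by
  have hs0 : (s:ℝ) ≠ 0 := Nat.cast_ne_zero.mpr (by omega)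
  have hss : s - 1 + 1 = s := by omega
  have step1 : ∑ p ∈ Finset.range n, (∑ t ∈ Finset.Icc (p+1) n, (1:ℝ)/(t:ℝ)) *
        ((p.descFactorial (s-1) * Nat.factorial (n-s) : ℕ) : ℝ)
      = ∑ t ∈ Finset.Icc 1 n, ∑ p ∈ Finset.range t,
          (1/(t:ℝ)) * ((p.descFactorial (s-1) * Nat.factorial (n-s) : ℕ) : ℝ) := by
    rw [Finset.sum_congr rfl (fun p _ => Finset.sum_mul _ _ _)]
    refine Finset.sum_comm' ?_
    intro t p
    simp only [Finset.mem_Icc, Finset.mem_range]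
    omega
  rw [step1]
  have step2 : ∀ t ∈ Finset.Icc 1 n, ∑ p ∈ Finset.range t,
        (1/(t:ℝ)) * ((p.descFactorial (s-1) * Nat.factorial (n-s) : ℕ) : ℝ)
      = (((t-1).descFactorial (s-1) * Nat.factorial (n-s) : ℕ) : ℝ) / s := by
    intro t ht
    rw [Finset.mem_Icc] at ht
    have ht0 : (t:ℝ) ≠ 0 := Nat.cast_ne_zero.mpr (by omega)
    have hk : s * (∑ p ∈ Finset.range t, p.descFactorial (s-1))
        = t * (t-1).descFactorial (s-1) := by
      obtain ⟨t', rfl⟩ : ∃ t', t = t'+1 := ⟨t-1, by omega⟩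
      have h1 := hockey_aux (s-1) (t'+1)
      rw [hss] at h1
      rw [h1, Nat.add_sub_cancel]
      conv_lhs => rw [← hss]
      rw [Nat.succ_descFactorial_succ]
    have key : ((∑ p ∈ Finset.range t, p.descFactorial (s-1) : ℕ) : ℝ) / t
        = (((t-1).descFactorial (s-1) : ℕ) : ℝ) / s := by
      rw [div_eq_div_iff ht0 hs0]
      have := congrArg (Nat.cast (R := ℝ)) hk
      push_cast at this ⊢
      linarith
    rw [← Finset.mul_sum]
    push_cast
    rw [← Finset.sum_mul]
    push_cast at key
    calc (1/(t:ℝ)) * ((∑ p ∈ Finset.range t, (p.descFactorial (s-1) : ℝ)) * (Nat.factorial (n-s) : ℝ))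
        = ((∑ p ∈ Finset.range t, (p.descFactorial (s-1) : ℝ))/t) * (Nat.factorial (n-s) : ℝ) := by
          ring
      _ = (((t-1).descFactorial (s-1) : ℝ)/s) * (Nat.factorial (n-s) : ℝ) := by rw [key]
      _ = ((t-1).descFactorial (s-1) : ℝ) * (Nat.factorial (n-s) : ℝ) / s := by ring
  rw [Finset.sum_congr rfl step2]
  have step3 : ∑ t ∈ Finset.Icc 1 n, (((t-1).descFactorial (s-1) * Nat.factorial (n-s) : ℕ) : ℝ) / s
      = ∑ u ∈ Finset.range n, ((u.descFactorial (s-1) * Nat.factorial (n-s) : ℕ) : ℝ) / s := by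
    refine Finset.sum_bij' (i := fun t _ => t-1) (j := fun u _ => u+1) ?_ ?_ ?_ ?_ ?_
    · intro t ht; rw [Finset.mem_Icc] at ht; exact Finset.mem_range.mpr (show t-1 < n by omega)
    · intro u hu; rw [Finset.mem_range] at hu; exact Finset.mem_Icc.mpr (show 1 ≤ u+1 ∧ u+1 ≤ n by omega)
    · intro t ht; rw [Finset.mem_Icc] at ht; show t - 1 + 1 = t; omega
    · intro u _; show u + 1 - 1 = u; omega
    · intro t _; rfl
  rw [step3]
  have hk2 : s * (∑ u ∈ Finset.range n, u.descFactorial (s-1)) = n.descFactorial s := by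
    have h1 := hockey_aux (s-1) n
    rwa [hss] at h1
  have hfac : Nat.factorial (n-s) * n.descFactorial s = Nat.factorial n :=
    Nat.factorial_mul_descFactorial hsn
  rw [← Finset.sum_div]
  rw [show (∑ u ∈ Finset.range n, ((u.descFactorial (s-1) * Nat.factorial (n-s) : ℕ) : ℝ))
      = ((∑ u ∈ Finset.range n, u.descFactorial (s-1) : ℕ) : ℝ) * (Nat.factorial (n-s) : ℝ) by
    push_cast
    rw [Finset.sum_mul]]
  have hcast : ((s:ℝ)) * ((∑ u ∈ Finset.range n, u.descFactorial (s-1) : ℕ) : ℝ)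
      = (n.descFactorial s : ℝ) := by
    exact_mod_cast congrArg (Nat.cast (R := ℝ)) hk2
  have hfacc : ((Nat.factorial (n-s) : ℝ)) * (n.descFactorial s : ℝ) = (Nat.factorial n : ℝ) := by
    exact_mod_cast congrArg (Nat.cast (R := ℝ)) hfac
  rw [div_eq_div_iff hs0 (pow_ne_zero 2 hs0)]
  calc ((∑ u ∈ Finset.range n, u.descFactorial (s-1) : ℕ) : ℝ) * (Nat.factorial (n-s) : ℝ) * (s:ℝ)^2
      = ((s:ℝ) * ((∑ u ∈ Finset.range n, u.descFactorial (s-1) : ℕ) : ℝ)) * (Nat.factorial (n-s) : ℝ) * (s:ℝ) := by ring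
    _ = (n.descFactorial s : ℝ) * (Nat.factorial (n-s) : ℝ) * (s:ℝ) := by rw [hcast]
    _ = ((Nat.factorial (n-s) : ℝ) * (n.descFactorial s : ℝ)) * (s:ℝ) := by ring
    _ = (Nat.factorial n : ℝ) * (s:ℝ) := by rw [hfacc]

private lemma card_preSet_aux {N : Type*} [Fintype N] [DecidableEq N]
    (σ : N ≃ Fin (Fintype.card N)) (i : N) :
    (preSet σ i).card = ((σ i : ℕ)) := by
  rw [preSet, ← Fintype.card_subtype, ← Fintype.card_fin ((σ i : ℕ))]
  apply Fintype.card_congr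
  refine ⟨fun x => ⟨((σ x.1 : ℕ)), x.2⟩,
    fun m => ⟨σ.symm ⟨m.1, lt_trans m.2 (σ i).isLt⟩, ?_⟩, ?_, ?_⟩
  · show σ (σ.symm _) < σ i
    rw [Equiv.apply_symm_apply]
    exact m.2
  · intro x
    apply Subtype.ext
    simp
  · intro m
    apply Fin.ext
    simp

private lemma reindex_aux {N : Type*} [Fintype N] [DecidableEq N]
    (v : Finset N → ℝ) {i j : N} (hij : i ≠ j) {P : Finset N} (hiP : i ∉ P) (c : ℝ) :
    (∑ T ∈ P.powerset.filter (fun T => j ∈ T), dividend v (insert i T)) * c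
      = ∑ S ∈ Finset.univ.filter (fun S : Finset N => i ∈ S ∧ j ∈ S),
          (if S.erase i ⊆ P then dividend v S * c else 0) := by
  rw [Finset.sum_mul]
  have : ∀ S ∈ Finset.univ.filter (fun S : Finset N => i ∈ S ∧ j ∈ S),
      (if S.erase i ⊆ P then dividend v S * c else 0)
      = if S.erase i ⊆ P then dividend v S * c else 0 := fun _ _ => rfl
  rw [show (∑ S ∈ Finset.univ.filter (fun S : Finset N => i ∈ S ∧ j ∈ S),
      (if S.erase i ⊆ P then dividend v S * c else 0))
    = ∑ S ∈ (Finset.univ.filter (fun S : Finset N => i ∈ S ∧ j ∈ S)).filter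
        (fun S => S.erase i ⊆ P), dividend v S * c from (Finset.sum_filter _ _).symm]
  rw [Finset.filter_filter]
  refine Finset.sum_bij (fun T _ => insert i T) ?_ ?_ ?_ ?_
  · intro T hT
    rw [mem_filter, mem_powerset] at hT
    rw [mem_filter]
    refine ⟨mem_univ _, ⟨mem_insert_self i T, mem_insert_of_mem hT.2⟩, ?_⟩
    rw [Finset.erase_insert (fun h => hiP (hT.1 h))]
    exact hT.1
  · intro T1 h1 T2 h2 heq
    rw [mem_filter, mem_powerset] at h1 h2
    have e1 : (insert i T1).erase i = T1 := Finset.erase_insert (fun h => hiP (h1.1 h))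
    have e2 : (insert i T2).erase i = T2 := Finset.erase_insert (fun h => hiP (h2.1 h))
    simpa [e1, e2] using congrArg (fun X => Finset.erase X i) heq
  · intro S hS
    rw [mem_filter] at hS
    refine ⟨S.erase i, ?_, ?_⟩
    · rw [mem_filter, mem_powerset]
      exact ⟨hS.2.2, Finset.mem_erase.mpr ⟨Ne.symm hij, hS.2.1.2⟩⟩
    · exact Finset.insert_erase hS.2.1.1
  · intro T _
    rfl

theorem stmt16 {N : Type*} [Fintype N] [DecidableEq N] [Nonempty N]
    (v : Finset N → ℝ) (hv0 : v ∅ = 0) (i j : N) (hij : i ≠ j) :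
    (∑ S ∈ Finset.univ.filter (fun S : Finset N => i ∈ S ∧ j ∈ S),
        dividend v S / ((S.card : ℝ)) ^ 2) =
      (∑ σ : N ≃ Fin (Fintype.card N),
          (v (insert i (preSet σ i)) - v (preSet σ i)
              - v ((insert i (preSet σ i)).erase j) + v ((preSet σ i).erase j)) *
            ∑ t ∈ Finset.Icc ((preSet σ i).card + 1) (Fintype.card N), (1 : ℝ) / (t : ℝ)) /
        (Nat.factorial (Fintype.card N) : ℝ) := by
  classical
  have hfac0 : (Nat.factorial (Fintype.card N) : ℝ) ≠ 0 :=
    Nat.cast_ne_zero.mpr (Nat.factorial_ne_zero _)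
  have hiPre : ∀ σ : N ≃ Fin (Fintype.card N), i ∉ preSet σ i := by
    intro σ h
    rw [preSet, mem_filter] at h
    exact lt_irrefl _ h.2
  -- rewrite the numerator of the RHS
  have hnum : (∑ σ : N ≃ Fin (Fintype.card N),
          (v (insert i (preSet σ i)) - v (preSet σ i)
              - v ((insert i (preSet σ i)).erase j) + v ((preSet σ i).erase j)) *
            ∑ t ∈ Finset.Icc ((preSet σ i).card + 1) (Fintype.card N), (1 : ℝ) / (t : ℝ))
      = ∑ S ∈ Finset.univ.filter (fun S : Finset N => i ∈ S ∧ j ∈ S),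
          dividend v S * ((Nat.factorial (Fintype.card N) : ℝ) / ((S.card : ℝ))^2) := by
    have h1 : ∀ σ : N ≃ Fin (Fintype.card N),
        (v (insert i (preSet σ i)) - v (preSet σ i)
            - v ((insert i (preSet σ i)).erase j) + v ((preSet σ i).erase j)) *
          (∑ t ∈ Finset.Icc ((preSet σ i).card + 1) (Fintype.card N), (1 : ℝ) / (t : ℝ))
        = ∑ S ∈ Finset.univ.filter (fun S : Finset N => i ∈ S ∧ j ∈ S),
            (if S.erase i ⊆ preSet σ i then dividend v S *
              (∑ t ∈ Finset.Icc ((preSet σ i).card + 1) (Fintype.card N), (1 : ℝ) / (t : ℝ))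
            else 0) := by
      intro σ
      rw [bracket_eq_aux v (hiPre σ) hij]
      exact reindex_aux v hij (hiPre σ) _
    rw [Finset.sum_congr rfl (fun σ _ => h1 σ), Finset.sum_comm]
    refine Finset.sum_congr rfl fun S hS => ?_
    rw [mem_filter] at hS
    have hiS : i ∈ S := hS.2.1
    have hs1 : 1 ≤ S.card := Finset.card_pos.mpr ⟨i, hiS⟩
    have hsn : S.card ≤ Fintype.card N := Finset.card_le_univ S
    have hBcard : (S.erase i).card = S.card - 1 := Finset.card_erase_of_mem hiS
    have hiB : i ∉ S.erase i := Finset.notMem_erase i S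
    -- group the σ-sum by the value p = σ i
    have hsub : ∀ σ : N ≃ Fin (Fintype.card N),
        (S.erase i ⊆ preSet σ i) ↔ ∀ k ∈ S.erase i, σ k < σ i := by
      intro σ
      constructor
      · intro h k hk
        have := h hk
        rw [preSet, mem_filter] at this
        exact this.2
      · intro h k hk
        rw [preSet, mem_filter]
        exact ⟨mem_univ _, h k hk⟩
    rw [← Finset.sum_fiberwise Finset.univ (fun σ : N ≃ Fin (Fintype.card N) => σ i)
      (fun σ => (if S.erase i ⊆ preSet σ i then dividend v S *
        (∑ t ∈ Finset.Icc ((preSet σ i).card + 1) (Fintype.card N), (1 : ℝ) / (t : ℝ))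
        else 0))]
    have hinner : ∀ p : Fin (Fintype.card N),
        ∑ σ ∈ Finset.univ.filter (fun σ : N ≃ Fin (Fintype.card N) => σ i = p),
          (if S.erase i ⊆ preSet σ i then dividend v S *
            (∑ t ∈ Finset.Icc ((preSet σ i).card + 1) (Fintype.card N), (1 : ℝ) / (t : ℝ))
          else 0)
        = dividend v S * ((∑ t ∈ Finset.Icc ((p : ℕ) + 1) (Fintype.card N), (1 : ℝ) / (t : ℝ))
            * (((p : ℕ).descFactorial (S.card - 1)
                * Nat.factorial (Fintype.card N - S.card) : ℕ) : ℝ)) := by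
      intro p
      have hstep : ∀ σ ∈ Finset.univ.filter
            (fun σ : N ≃ Fin (Fintype.card N) => σ i = p),
          (if S.erase i ⊆ preSet σ i then dividend v S *
            (∑ t ∈ Finset.Icc ((preSet σ i).card + 1) (Fintype.card N), (1 : ℝ) / (t : ℝ))
          else 0)
          = (if ∀ k ∈ S.erase i, σ k < p then dividend v S *
            (∑ t ∈ Finset.Icc ((p : ℕ) + 1) (Fintype.card N), (1 : ℝ) / (t : ℝ))
          else 0) := by
        intro σ hσ
        rw [mem_filter] at hσ
        rw [card_preSet_aux σ i, hσ.2]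
        simp only [hsub σ, hσ.2]
      rw [Finset.sum_congr rfl hstep, ← Finset.sum_filter, Finset.filter_filter,
        Finset.sum_const, nsmul_eq_mul]
      rw [count_lemma_aux i (S.erase i) hiB p, hBcard, show S.card - 1 + 1 = S.card by omega]
      push_cast
      ring
    rw [Finset.sum_congr rfl (fun p _ => hinner p), ← Finset.mul_sum]
    congr 1
    exact (Fin.sum_univ_eq_sum_range (fun m => (∑ t ∈ Finset.Icc (m + 1) (Fintype.card N),
        (1 : ℝ) / (t : ℝ)) * ((m.descFactorial (S.card - 1)
          * Nat.factorial (Fintype.card N - S.card) : ℕ) : ℝ)) (Fintype.card N)).trans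
      (keysum_aux (Fintype.card N) S.card hs1 hsn)
  rw [hnum, Finset.sum_div]
  refine Finset.sum_congr rfl fun S hS => ?_
  rw [mem_filter] at hS
  have hs1 : (S.card : ℝ) ≠ 0 := by
    have h : 0 < S.card := Finset.card_pos.mpr ⟨i, hS.2.1⟩
    exact ne_of_gt (by exact_mod_cast h)
  field_simp
end
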